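/- arXiv:2405.04375 — 8 statements merged into one kernel-verified Lean document; each statement's English description precedes it below -/
import Mathlib

section
/- Let p ∈ (0,1), let α, β be real numbers, and let (X₁, X₂) be a coherent pair with mean p. Let S₂ ⊂ ℝ³ be the sphere with a diameter segment from the origin to a fixed vector w ∈ ℝ³ with ‖w‖ = √(p(1−p)), i.e. S₂ = {x ∈ ℝ³ : ‖x − w/2‖ = ‖w/2‖}. Then E[α(X₁−X₂)² + β(X₁+X₂−2p)²] ≤ max over x₁, x₂ ∈ S₂ of (α‖x₁−x₂‖² + β‖x₁+x₂‖²). -/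
open MeasureTheory

/-- The sphere in `ℝ³` having the segment from `0` to `w` as a diameter. -/
def diamSphere (w : EuclideanSpace ℝ (Fin 3)) : Set (EuclideanSpace ℝ (Fin 3)) :=
  {x | ‖x - (2 : ℝ)⁻¹ • w‖ = ‖(2 : ℝ)⁻¹ • w‖}

section Aux

open scoped RealInnerProductSpace

lemma aux_eq_of_sq_eq {a b : ℝ} (ha : 0 ≤ a) (hb : 0 ≤ b) (h : a ^ 2 = b ^ 2) : a = b := by
  calc a = Real.sqrt (a ^ 2) := (Real.sqrt_sq ha).symm
    _ = Real.sqrt (b ^ 2) := by rw [h]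
    _ = b := Real.sqrt_sq hb

lemma mem_diamSphere_iff {w x : EuclideanSpace ℝ (Fin 3)} :
    x ∈ diamSphere w ↔ ‖x‖ ^ 2 = ⟪x, w⟫ := by
  have hexp : ‖x - (2 : ℝ)⁻¹ • w‖ ^ 2
      = ‖x‖ ^ 2 - ⟪x, w⟫ + ‖(2 : ℝ)⁻¹ • w‖ ^ 2 := by
    rw [norm_sub_sq_real, real_inner_smul_right]; ring
  constructor
  · intro h
    have h2 : ‖x - (2 : ℝ)⁻¹ • w‖ ^ 2 = ‖(2 : ℝ)⁻¹ • w‖ ^ 2 := by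
      rw [h]
    rw [hexp] at h2
    linarith
  · intro h
    refine aux_eq_of_sq_eq (norm_nonneg _) (norm_nonneg _) ?_
    rw [hexp, h]; ring

lemma aux_norm_le_of_mem_diamSphere {w x : EuclideanSpace ℝ (Fin 3)}
    (hx : x ∈ diamSphere w) : ‖x‖ ≤ ‖w‖ := by
  have h : ‖x - (2 : ℝ)⁻¹ • w‖ = ‖(2 : ℝ)⁻¹ • w‖ := hx
  have hhalf : ‖(2 : ℝ)⁻¹ • w‖ = 2⁻¹ * ‖w‖ := by
    rw [norm_smul]; norm_num
  calc ‖x‖ = ‖(x - (2 : ℝ)⁻¹ • w) + (2 : ℝ)⁻¹ • w‖ := by rw [sub_add_cancel]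
    _ ≤ ‖x - (2 : ℝ)⁻¹ • w‖ + ‖(2 : ℝ)⁻¹ • w‖ := norm_add_le _ _
    _ = ‖w‖ := by rw [h, hhalf]; ring

lemma aux_inner_toLp {Ω : Type} {mΩ' : MeasurableSpace Ω} {P : Measure Ω} {f g : Ω → ℝ}
    (hf : MemLp f 2 P) (hg : MemLp g 2 P) :
    ⟪hf.toLp f, hg.toLp g⟫ = ∫ ω, f ω * g ω ∂P := by
  rw [L2.inner_def]
  refine integral_congr_ae ?_
  filter_upwards [hf.coeFn_toLp, hg.coeFn_toLp] with ω h1 h2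
  simp [h1, h2, RCLike.inner_apply, mul_comm]

lemma aux_integral_X {Ω : Type} {mΩ' : MeasurableSpace Ω} (P : Measure Ω) [IsProbabilityMeasure P]
    {p : ℝ} (hp0 : 0 ≤ p) (X : Ω → ℝ) (hXmeas : Measurable X) (hX01 : ∀ ω, X ω = 0 ∨ X ω = 1)
    (hXp : P {ω | X ω = 1} = ENNReal.ofReal p) : ∫ ω, X ω ∂P = p := by
  have hs : MeasurableSet {ω | X ω = 1} := by
    have hpre : {ω | X ω = 1} = X ⁻¹' {1} := rfl
    rw [hpre]; exact hXmeas (measurableSet_singleton 1)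
  have hXind : X = Set.indicator {ω | X ω = 1} (fun _ => (1 : ℝ)) := by
    funext ω; rcases hX01 ω with h | h <;> simp [Set.indicator, h]
  rw [hXind, integral_indicator_const (1 : ℝ) hs, measureReal_def, hXp]
  simp [ENNReal.toReal_ofReal hp0]

end Aux

set_option maxHeartbeats 2000000 in
/-- For a coherent pair `(X₁, X₂)` with mean `p`,
`E[α(X₁−X₂)² + β(X₁+X₂−2p)²]` is bounded by the maximum of
`α‖x₁−x₂‖² + β‖x₁+x₂‖²` over the sphere with diameter `w`, `‖w‖ = √(p(1−p))`. -/
theorem stmt0 (p : ℝ) (hp : p ∈ Set.Ioo (0 : ℝ) 1) (α β : ℝ)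
    {Ω : Type} [mΩ : MeasurableSpace Ω] (P : Measure Ω) [IsProbabilityMeasure P]
    (X : Ω → ℝ) (hXmeas : Measurable X) (hX01 : ∀ ω, X ω = 0 ∨ X ω = 1)
    (hXp : P {ω | X ω = 1} = ENNReal.ofReal p)
    (m₁ m₂ : MeasurableSpace Ω) (hm₁ : m₁ ≤ mΩ) (hm₂ : m₂ ≤ mΩ)
    (w : EuclideanSpace ℝ (Fin 3)) (hw : ‖w‖ = Real.sqrt (p * (1 - p))) :
    ∫ ω, (α * ((P[X|m₁]) ω - (P[X|m₂]) ω) ^ 2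
        + β * ((P[X|m₁]) ω + (P[X|m₂]) ω - 2 * p) ^ 2) ∂P ≤
      sSup {v | ∃ x₁ ∈ diamSphere w, ∃ x₂ ∈ diamSphere w,
        v = α * ‖x₁ - x₂‖ ^ 2 + β * ‖x₁ + x₂‖ ^ 2} := by
  classical
  obtain ⟨hp0, hp1⟩ := hp
  -- basic facts about X
  have hXbd : ∀ ω, ‖X ω‖ ≤ 1 := by
    intro ω; rcases hX01 ω with h | h <;> simp [h]
  have hXint : Integrable X P :=
    ⟨hXmeas.aestronglyMeasurable, HasFiniteIntegral.of_bounded (C := 1) (ae_of_all _ hXbd)⟩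
  have hX2 : MemLp X 2 P :=
    MemLp.of_bound hXmeas.aestronglyMeasurable 1 (ae_of_all _ hXbd)
  have hEX : ∫ ω, X ω ∂P = p := aux_integral_X P hp0.le X hXmeas hX01 hXp
  -- facts about conditional expectations
  have facts : ∀ (m : MeasurableSpace Ω), m ≤ mΩ →
      MemLp (P[X|m]) 2 P ∧ (∫ ω, (P[X|m]) ω ∂P = p) ∧
      (∫ ω, (P[X|m]) ω * X ω ∂P = ∫ ω, (P[X|m]) ω * (P[X|m]) ω ∂P) ∧
      AEStronglyMeasurable[mΩ] (P[X|m]) P ∧ (∀ᵐ ω ∂P, ‖(P[X|m]) ω‖ ≤ 1) := by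
    intro m hm
    set Y := P[X|m] with hYdef
    have hYm : StronglyMeasurable[m] Y := stronglyMeasurable_condExp
    have hYsm : AEStronglyMeasurable[mΩ] Y P := (hYm.mono hm).aestronglyMeasurable
    have h0 : 0 ≤ᵐ[P] Y := by
      refine condExp_nonneg (ae_of_all _ fun ω => ?_)
      rcases hX01 ω with h | h <;> simp [h]
    have h1 : Y ≤ᵐ[P] fun _ => (1 : ℝ) := by
      have := condExp_mono (m := m) hXint (integrable_const (1 : ℝ))
        (ae_of_all _ fun ω => by rcases hX01 ω with h | h <;> simp [h])
      rwa [condExp_const hm (1 : ℝ)] at this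
    have hYbd : ∀ᵐ ω ∂P, ‖Y ω‖ ≤ 1 := by
      filter_upwards [h0, h1] with ω ha hb
      have ha' : (0 : ℝ) ≤ Y ω := ha
      rw [Real.norm_eq_abs, abs_le]
      exact ⟨by linarith, hb⟩
    have hY2 : MemLp Y 2 P := MemLp.of_bound hYsm 1 hYbd
    have hEY : ∫ ω, Y ω ∂P = p := by
      rw [hYdef, integral_condExp hm]; exact hEX
    have hIntYX : Integrable (Y * X) P := hXint.bdd_mul hYsm hYbd
    have horth : ∫ ω, Y ω * X ω ∂P = ∫ ω, Y ω * Y ω ∂P := by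
      have hmul : P[Y * X|m] =ᵐ[P] Y * P[X|m] :=
        condExp_mul_of_stronglyMeasurable_left hYm hIntYX hXint
      calc ∫ ω, Y ω * X ω ∂P = ∫ ω, (Y * X) ω ∂P := rfl
        _ = ∫ ω, (P[Y * X|m]) ω ∂P := (integral_condExp hm).symm
        _ = ∫ ω, (Y * P[X|m]) ω ∂P := integral_congr_ae hmul
        _ = ∫ ω, Y ω * Y ω ∂P := rfl
    exact ⟨hY2, hEY, horth, hYsm, hYbd⟩
  obtain ⟨hY2₁, hEY₁, horth₁, hYsm₁, hYbd₁⟩ := facts m₁ hm₁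
  obtain ⟨hY2₂, hEY₂, horth₂, hYsm₂, hYbd₂⟩ := facts m₂ hm₂
  set Y₁ := P[X|m₁] with hY₁def
  set Y₂ := P[X|m₂] with hY₂def
  have hY₁int : Integrable Y₁ P := integrable_condExp
  have hY₂int : Integrable Y₂ P := integrable_condExp
  -- expansion lemma
  have expand : ∀ {u v : Ω → ℝ}, Integrable (fun ω => u ω * v ω) P → Integrable u P →
      Integrable v P → (∫ ω, u ω ∂P = p) → (∫ ω, v ω ∂P = p) →
      ∫ ω, (u ω - p) * (v ω - p) ∂P = (∫ ω, u ω * v ω ∂P) - p ^ 2 := by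
    intro u v huv hu hv hup hvp
    have i0 : Integrable (fun ω => p * u ω - p ^ 2) P := (hu.const_mul p).sub (integrable_const _)
    have i1 : Integrable (fun ω => p * v ω + (p * u ω - p ^ 2)) P := (hv.const_mul p).add i0
    have e2 : ∫ ω, (u ω * v ω - (p * v ω + (p * u ω - p ^ 2))) ∂P
        = (∫ ω, u ω * v ω ∂P) - ∫ ω, (p * v ω + (p * u ω - p ^ 2)) ∂P := integral_sub huv i1
    have e3 : ∫ ω, (p * v ω + (p * u ω - p ^ 2)) ∂P
        = (∫ ω, p * v ω ∂P) + ∫ ω, (p * u ω - p ^ 2) ∂P := integral_add (hv.const_mul p) i0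
    have e4 : ∫ ω, (p * u ω - p ^ 2) ∂P
        = (∫ ω, p * u ω ∂P) - ∫ _ω, (p ^ 2 : ℝ) ∂P :=
      integral_sub (hu.const_mul p) (integrable_const _)
    calc ∫ ω, (u ω - p) * (v ω - p) ∂P
        = ∫ ω, (u ω * v ω - (p * v ω + (p * u ω - p ^ 2))) ∂P := by
          refine integral_congr_ae (ae_of_all _ fun ω => ?_); ring
      _ = (∫ ω, u ω * v ω ∂P) - p ^ 2 := by
          rw [e2, e3, e4, integral_const_mul, integral_const_mul, hup, hvp, integral_const]
          simp only [measure_univ, probReal_univ, ENNReal.toReal_one, one_smul, smul_eq_mul, one_mul]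
          ring
  have hIntY₁X : Integrable (fun ω => Y₁ ω * X ω) P := hXint.bdd_mul hYsm₁ hYbd₁
  have hIntY₂X : Integrable (fun ω => Y₂ ω * X ω) P := hXint.bdd_mul hYsm₂ hYbd₂
  have hIntY₁Y₁ : Integrable (fun ω => Y₁ ω * Y₁ ω) P := hY₁int.bdd_mul hYsm₁ hYbd₁
  have hIntY₂Y₂ : Integrable (fun ω => Y₂ ω * Y₂ ω) P := hY₂int.bdd_mul hYsm₂ hYbd₂
  have hIntXX : Integrable (fun ω => X ω * X ω) P := hXint.bdd_mul hXmeas.aestronglyMeasurable (ae_of_all _ hXbd)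
  -- centered functions
  set g₁ : Ω → ℝ := fun ω => Y₁ ω - p with hg₁def
  set g₂ : Ω → ℝ := fun ω => Y₂ ω - p with hg₂def
  set z : Ω → ℝ := fun ω => X ω - p with hzdef
  have hG₁ : MemLp g₁ 2 P := hY2₁.sub (memLp_const p)
  have hG₂ : MemLp g₂ 2 P := hY2₂.sub (memLp_const p)
  have hz2 : MemLp z 2 P := hX2.sub (memLp_const p)
  have A₁ : ∫ ω, g₁ ω * z ω ∂P = ∫ ω, g₁ ω * g₁ ω ∂P := by
    have e1 := expand hIntY₁X hY₁int hXint hEY₁ hEX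
    have e2 := expand hIntY₁Y₁ hY₁int hY₁int hEY₁ hEY₁
    simp only [hg₁def, hzdef]
    rw [e1, e2, horth₁]
  have A₂ : ∫ ω, g₂ ω * z ω ∂P = ∫ ω, g₂ ω * g₂ ω ∂P := by
    have e1 := expand hIntY₂X hY₂int hXint hEY₂ hEX
    have e2 := expand hIntY₂Y₂ hY₂int hY₂int hEY₂ hEY₂
    simp only [hg₂def, hzdef]
    rw [e1, e2, horth₂]
  have Azz : ∫ ω, z ω * z ω ∂P = p * (1 - p) := by
    have e1 := expand hIntXX hXint hXint hEX hEX
    have hXX : ∫ ω, X ω * X ω ∂P = p := by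
      rw [show (fun ω => X ω * X ω) = X from funext fun ω => by
        rcases hX01 ω with h | h <;> simp [h]]
      exact hEX
    simp only [hzdef]
    rw [e1, hXX]; ring
  -- L² elements
  set Zl : Lp ℝ 2 P := hz2.toLp z with hZldef
  set Gl₁ : Lp ℝ 2 P := hG₁.toLp g₁ with hGl₁def
  set Gl₂ : Lp ℝ 2 P := hG₂.toLp g₂ with hGl₂def
  have hinner₁ : inner ℝ Gl₁ Zl = inner ℝ Gl₁ Gl₁ := by
    rw [hGl₁def, hZldef, aux_inner_toLp hG₁ hz2, aux_inner_toLp hG₁ hG₁, A₁]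
  have hinner₂ : inner ℝ Gl₂ Zl = inner ℝ Gl₂ Gl₂ := by
    rw [hGl₂def, hZldef, aux_inner_toLp hG₂ hz2, aux_inner_toLp hG₂ hG₂, A₂]
  have hZnorm : ‖Zl‖ ^ 2 = p * (1 - p) := by
    rw [← real_inner_self_eq_norm_sq, hZldef, aux_inner_toLp hz2 hz2, Azz]
  -- the span
  set V : Submodule ℝ (Lp ℝ 2 P) := Submodule.span ℝ ({Zl, Gl₁, Gl₂} : Set (Lp ℝ 2 P)) with hVdef
  haveI : FiniteDimensional ℝ V :=
    FiniteDimensional.span_of_finite ℝ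
      ((Set.finite_singleton Gl₂).insert Gl₁ |>.insert Zl)
  have hn : Module.finrank ℝ V ≤ 3 := by
    have hseq : ({Zl, Gl₁, Gl₂} : Set (Lp ℝ 2 P))
        = (({Zl, Gl₁, Gl₂} : Finset (Lp ℝ 2 P)) : Set (Lp ℝ 2 P)) := by simp
    have hcard : ({Zl, Gl₁, Gl₂} : Finset (Lp ℝ 2 P)).card ≤ 3 :=
      (Finset.card_insert_le _ _).trans (Nat.succ_le_succ
        ((Finset.card_insert_le _ _).trans (Nat.succ_le_succ (Finset.card_singleton _).le)))
    calc Module.finrank ℝ V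
        = (({Zl, Gl₁, Gl₂} : Finset (Lp ℝ 2 P)) : Set (Lp ℝ 2 P)).finrank ℝ := by
          rw [hVdef, hseq]; rfl
      _ ≤ ({Zl, Gl₁, Gl₂} : Finset (Lp ℝ 2 P)).card := finrank_span_finset_le_card _
      _ ≤ 3 := hcard
  -- isometric embedding of V into ℝ³
  set b : OrthonormalBasis (Fin (Module.finrank ℝ V)) ℝ V := stdOrthonormalBasis ℝ V with hbdef
  set e : OrthonormalBasis (Fin 3) ℝ (EuclideanSpace ℝ (Fin 3)) :=
    EuclideanSpace.basisFun (Fin 3) ℝ with hedef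
  set L : V →ₗ[ℝ] EuclideanSpace ℝ (Fin 3) :=
    Module.Basis.constr b.toBasis ℝ (fun k => e (Fin.castLE hn k)) with hLdef
  have hLorth : Orthonormal ℝ (L ∘ b.toBasis) := by
    have hfun : (L ∘ ⇑b.toBasis) = ⇑e ∘ Fin.castLE hn := by
      funext k
      show L (b.toBasis k) = e (Fin.castLE hn k)
      rw [hLdef]
      exact b.toBasis.constr_basis ℝ _ k
    rw [hfun]
    exact e.orthonormal.comp _ (Fin.strictMono_castLE hn).injective
  have hbV : Orthonormal ℝ (⇑b.toBasis) := by
    rw [b.coe_toBasis]; exact b.orthonormal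
  set T : V →ₗᵢ[ℝ] EuclideanSpace ℝ (Fin 3) := L.isometryOfOrthonormal hbV hLorth with hTdef
  -- members of V
  have hZm : Zl ∈ V := Submodule.subset_span (by simp)
  have hG₁m : Gl₁ ∈ V := Submodule.subset_span (by simp)
  have hG₂m : Gl₂ ∈ V := Submodule.subset_span (by simp)
  set zV : V := ⟨Zl, hZm⟩ with hzVdef
  set g₁V : V := ⟨Gl₁, hG₁m⟩ with hg₁Vdef
  set g₂V : V := ⟨Gl₂, hG₂m⟩ with hg₂Vdef
  -- reflection carrying T zV to w
  have hnormu : ‖T zV‖ = ‖w‖ := by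
    refine aux_eq_of_sq_eq (norm_nonneg _) (norm_nonneg _) ?_
    have h1 : ‖T zV‖ = ‖zV‖ := T.norm_map zV
    have h2 : ‖zV‖ = ‖Zl‖ := rfl
    have h3 : ‖w‖ ^ 2 = p * (1 - p) := by
      rw [hw, Real.sq_sqrt]
      nlinarith
    rw [h1, h2, hZnorm, h3]
  set R : EuclideanSpace ℝ (Fin 3) ≃ₗᵢ[ℝ] EuclideanSpace ℝ (Fin 3) :=
    Submodule.reflection (ℝ ∙ (T zV - w))ᗮ with hRdef
  have hRu : R (T zV) = w := Submodule.reflection_sub hnormu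
  set x₁ : EuclideanSpace ℝ (Fin 3) := R (T g₁V) with hx₁def
  set x₂ : EuclideanSpace ℝ (Fin 3) := R (T g₂V) with hx₂def
  -- inner products are preserved
  have hpres : ∀ a c : V, inner ℝ (R (T a)) (R (T c)) = inner ℝ (a : Lp ℝ 2 P) (c : Lp ℝ 2 P) := by
    intro a c
    rw [R.inner_map_map, T.inner_map_map, Submodule.coe_inner]
  have hnormpres : ∀ a : V, ‖R (T a)‖ = ‖(a : Lp ℝ 2 P)‖ := by
    intro a
    rw [R.norm_map, T.norm_map]; rfl
  -- sphere membership
  have hx₁mem : x₁ ∈ diamSphere w := by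
    rw [mem_diamSphere_iff]
    calc ‖x₁‖ ^ 2 = ‖Gl₁‖ ^ 2 := by rw [hx₁def, hnormpres]
      _ = inner ℝ Gl₁ Gl₁ := (real_inner_self_eq_norm_sq Gl₁).symm
      _ = inner ℝ Gl₁ Zl := hinner₁.symm
      _ = inner ℝ x₁ (R (T zV)) := (hpres g₁V zV).symm
      _ = inner ℝ x₁ w := by rw [hRu]
  have hx₂mem : x₂ ∈ diamSphere w := by
    rw [mem_diamSphere_iff]
    calc ‖x₂‖ ^ 2 = ‖Gl₂‖ ^ 2 := by rw [hx₂def, hnormpres]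
      _ = inner ℝ Gl₂ Gl₂ := (real_inner_self_eq_norm_sq Gl₂).symm
      _ = inner ℝ Gl₂ Zl := hinner₂.symm
      _ = inner ℝ x₂ (R (T zV)) := (hpres g₂V zV).symm
      _ = inner ℝ x₂ w := by rw [hRu]
  -- norms of differences and sums
  have hsubV : x₁ - x₂ = R (T (g₁V - g₂V)) := by
    rw [hx₁def, hx₂def, map_sub, map_sub]
  have haddV : x₁ + x₂ = R (T (g₁V + g₂V)) := by
    rw [hx₁def, hx₂def, map_add, map_add]
  have hcoesub : ((g₁V - g₂V : V) : Lp ℝ 2 P) = Gl₁ - Gl₂ := rfl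
  have hcoeadd : ((g₁V + g₂V : V) : Lp ℝ 2 P) = Gl₁ + Gl₂ := rfl
  have hnsub : ‖x₁ - x₂‖ = ‖Gl₁ - Gl₂‖ := by
    rw [hsubV, hnormpres, hcoesub]
  have hnadd : ‖x₁ + x₂‖ = ‖Gl₁ + Gl₂‖ := by
    rw [haddV, hnormpres, hcoeadd]
  -- compute ∫ of the two squares
  have hGsub : MemLp (g₁ - g₂) 2 P := hG₁.sub hG₂
  have hGadd : MemLp (g₁ + g₂) 2 P := hG₁.add hG₂
  have hGlsub : Gl₁ - Gl₂ = hGsub.toLp (g₁ - g₂) := by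
    rw [hGl₁def, hGl₂def, MemLp.toLp_sub]
  have hGladd : Gl₁ + Gl₂ = hGadd.toLp (g₁ + g₂) := by
    rw [hGl₁def, hGl₂def, MemLp.toLp_add]
  have hnsub2 : ‖Gl₁ - Gl₂‖ ^ 2 = ∫ ω, (g₁ ω - g₂ ω) * (g₁ ω - g₂ ω) ∂P := by
    rw [← real_inner_self_eq_norm_sq, hGlsub, aux_inner_toLp hGsub hGsub]
    rfl
  have hnadd2 : ‖Gl₁ + Gl₂‖ ^ 2 = ∫ ω, (g₁ ω + g₂ ω) * (g₁ ω + g₂ ω) ∂P := by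
    rw [← real_inner_self_eq_norm_sq, hGladd, aux_inner_toLp hGadd hGadd]
    rfl
  -- the LHS equals the geometric quantity
  have hsq1 : Integrable (fun ω => (Y₁ ω - Y₂ ω) ^ 2) P := by
    have : MemLp (fun ω => Y₁ ω - Y₂ ω) 2 P := hY2₁.sub hY2₂
    exact this.integrable_sq
  have hsq2 : Integrable (fun ω => (Y₁ ω + Y₂ ω - 2 * p) ^ 2) P := by
    have : MemLp (fun ω => Y₁ ω + Y₂ ω - 2 * p) 2 P :=
      (hY2₁.add hY2₂).sub (memLp_const (2 * p))
    exact this.integrable_sq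
  have hLHS : ∫ ω, (α * (Y₁ ω - Y₂ ω) ^ 2 + β * (Y₁ ω + Y₂ ω - 2 * p) ^ 2) ∂P
      = α * ‖x₁ - x₂‖ ^ 2 + β * ‖x₁ + x₂‖ ^ 2 := by
    rw [integral_add (hsq1.const_mul α) (hsq2.const_mul β),
      integral_const_mul, integral_const_mul]
    have h1 : ∫ ω, (Y₁ ω - Y₂ ω) ^ 2 ∂P = ∫ ω, (g₁ ω - g₂ ω) * (g₁ ω - g₂ ω) ∂P := by
      refine integral_congr_ae (ae_of_all _ fun ω => ?_)
      simp only [hg₁def, hg₂def]; ring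
    have h2 : ∫ ω, (Y₁ ω + Y₂ ω - 2 * p) ^ 2 ∂P
        = ∫ ω, (g₁ ω + g₂ ω) * (g₁ ω + g₂ ω) ∂P := by
      refine integral_congr_ae (ae_of_all _ fun ω => ?_)
      simp only [hg₁def, hg₂def]; ring
    rw [h1, h2, hnsub, hnadd, hnsub2, hnadd2]
  -- the set is bounded above
  have hbdd : BddAbove {v | ∃ x₁ ∈ diamSphere w, ∃ x₂ ∈ diamSphere w,
      v = α * ‖x₁ - x₂‖ ^ 2 + β * ‖x₁ + x₂‖ ^ 2} := by
    refine ⟨(|α| + |β|) * (2 * ‖w‖) ^ 2, ?_⟩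
    rintro v ⟨y₁, hy₁, y₂, hy₂, rfl⟩
    have hb₁ : ‖y₁‖ ≤ ‖w‖ := aux_norm_le_of_mem_diamSphere hy₁
    have hb₂ : ‖y₂‖ ≤ ‖w‖ := aux_norm_le_of_mem_diamSphere hy₂
    have hd : ‖y₁ - y₂‖ ^ 2 ≤ (2 * ‖w‖) ^ 2 := by
      have := (norm_sub_le y₁ y₂).trans (by linarith : ‖y₁‖ + ‖y₂‖ ≤ 2 * ‖w‖)
      nlinarith [norm_nonneg (y₁ - y₂)]
    have hs : ‖y₁ + y₂‖ ^ 2 ≤ (2 * ‖w‖) ^ 2 := by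
      have := (norm_add_le y₁ y₂).trans (by linarith : ‖y₁‖ + ‖y₂‖ ≤ 2 * ‖w‖)
      nlinarith [norm_nonneg (y₁ + y₂)]
    have h1 : α * ‖y₁ - y₂‖ ^ 2 ≤ |α| * (2 * ‖w‖) ^ 2 := by
      calc α * ‖y₁ - y₂‖ ^ 2 ≤ |α * ‖y₁ - y₂‖ ^ 2| := le_abs_self _
        _ = |α| * ‖y₁ - y₂‖ ^ 2 := by rw [abs_mul, abs_of_nonneg (sq_nonneg ‖y₁ - y₂‖)]
        _ ≤ |α| * (2 * ‖w‖) ^ 2 := mul_le_mul_of_nonneg_left hd (abs_nonneg _)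
    have h2 : β * ‖y₁ + y₂‖ ^ 2 ≤ |β| * (2 * ‖w‖) ^ 2 := by
      calc β * ‖y₁ + y₂‖ ^ 2 ≤ |β * ‖y₁ + y₂‖ ^ 2| := le_abs_self _
        _ = |β| * ‖y₁ + y₂‖ ^ 2 := by rw [abs_mul, abs_of_nonneg (sq_nonneg ‖y₁ + y₂‖)]
        _ ≤ |β| * (2 * ‖w‖) ^ 2 := mul_le_mul_of_nonneg_left hs (abs_nonneg _)
    linarith
  have hmem : α * ‖x₁ - x₂‖ ^ 2 + β * ‖x₁ + x₂‖ ^ 2 ∈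
      {v | ∃ x₁ ∈ diamSphere w, ∃ x₂ ∈ diamSphere w,
        v = α * ‖x₁ - x₂‖ ^ 2 + β * ‖x₁ + x₂‖ ^ 2} :=
    ⟨x₁, hx₁mem, x₂, hx₂mem, rfl⟩
  rw [hLHS]
  exact le_csSup hbdd hmem
end

section
/- Let p ∈ (0,1) and let α, β be real numbers. For every coherent pair (X₁, X₂) with mean p: E[α(X₁−X₂)² + β(X₁+X₂−2p)²] ≤ (α²/(α−β))·p(1−p) if α ≥ max(0, 2β) (and (α,β) ≠ (0,0)), and E[α(X₁−X₂)² + β(X₁+X₂−2p)²] ≤ max(0, 4β, α+β)·p(1−p) otherwise. Moreover, when α ≥ max(0, 2β) and α > 0, the value (α²/(α−β))·p(1−p) is attained by a coherent pair (X₁, X₂) if and only if (X₁ − p) + (X₂ − p) = (α/(α−β))·(X − p) almost surely, where X is the underlying Bernoulli random variable. -/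
open MeasureTheory

lemma bernoulli_integral {Ω : Type} [mΩ : MeasurableSpace Ω] (P : Measure Ω)
    [IsProbabilityMeasure P] (X : Ω → ℝ) (hXmeas : Measurable X)
    (hX01 : ∀ ω, X ω = 0 ∨ X ω = 1) (p : ℝ) (hp0 : 0 ≤ p)
    (hXp : P {ω | X ω = 1} = ENNReal.ofReal p) : ∫ ω, X ω ∂P = p := by
  have hXeq : X = Set.indicator {ω | X ω = 1} (fun _ => (1:ℝ)) := by
    funext ω
    rcases hX01 ω with h | h <;> simp [Set.indicator, h]
  have hms : MeasurableSet {ω | X ω = 1} := hXmeas (measurableSet_singleton 1)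
  rw [hXeq, integral_indicator_const (1:ℝ) hms, measureReal_def, hXp, smul_eq_mul, mul_one,
    ENNReal.toReal_ofReal hp0]

lemma condexp_facts {Ω : Type} [mΩ : MeasurableSpace Ω] (P : Measure Ω)
    [IsProbabilityMeasure P] (X : Ω → ℝ) (hXmeas : Measurable X)
    (hXint : Integrable X P) (hXb : ∀ ω, 0 ≤ X ω ∧ X ω ≤ 1)
    (m : MeasurableSpace Ω) (hm : m ≤ mΩ) :
    AEStronglyMeasurable[mΩ] (P[X|m]) P ∧ (∀ᵐ ω ∂P, 0 ≤ (P[X|m]) ω ∧ (P[X|m]) ω ≤ 1) ∧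
    (∫ ω, (P[X|m]) ω ∂P = ∫ ω, X ω ∂P) ∧
    (∫ ω, (P[X|m]) ω * X ω ∂P = ∫ ω, (P[X|m]) ω * (P[X|m]) ω ∂P) := by
  set Y := P[X|m] with hYdef
  have asm : AEStronglyMeasurable[mΩ] Y P :=
    (stronglyMeasurable_condExp.mono hm).aestronglyMeasurable
  have hY1 : Y ≤ᵐ[P] fun _ => 1 := by
    have h := condExp_mono (μ := P) (m := m) hXint (integrable_const 1)
      (ae_of_all _ fun ω => (hXb ω).2)
    have hcc := condExp_const (μ := P) hm (1:ℝ)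
    rwa [hcc] at h
  have hY0 : (fun _ => (0:ℝ)) ≤ᵐ[P] Y :=
    condExp_nonneg (ae_of_all _ fun ω => (hXb ω).1)
  have hb : ∀ᵐ ω ∂P, 0 ≤ Y ω ∧ Y ω ≤ 1 := by
    filter_upwards [hY0, hY1] with ω h0 h1
    exact ⟨h0, h1⟩
  have hiYX : Integrable (fun ω => Y ω * X ω) P := by
    refine (integrable_const (1:ℝ)).mono' (asm.mul hXmeas.aestronglyMeasurable) ?_
    filter_upwards [hb] with ω h1
    rw [Real.norm_eq_abs, abs_mul]
    calc |Y ω| * |X ω| ≤ 1 * 1 := by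
          refine mul_le_mul ?_ ?_ (abs_nonneg _) zero_le_one <;>
            rw [abs_le] <;> constructor <;> first
              | linarith [h1.1, h1.2]
              | linarith [(hXb ω).1, (hXb ω).2]
      _ = 1 := one_mul 1
  refine ⟨asm, hb, integral_condExp hm, ?_⟩
  calc ∫ ω, Y ω * X ω ∂P = ∫ ω, (P[fun ω => Y ω * X ω|m]) ω ∂P :=
        (integral_condExp hm).symm
    _ = ∫ ω, Y ω * Y ω ∂P := by
        refine integral_congr_ae ?_
        filter_upwards [condExp_mul_of_stronglyMeasurable_left (μ := P)
          (stronglyMeasurable_condExp (m := m)) (by exact hiYX) hXint] with ω h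
        rw [hYdef]; exact h

set_option maxHeartbeats 2000000 in
lemma core {Ω : Type} [mΩ : MeasurableSpace Ω] (P : Measure Ω) [IsProbabilityMeasure P]
    (p α β : ℝ) (hp0 : 0 < p) (hp1 : p < 1) (X Y₁ Y₂ : Ω → ℝ)
    (hXb : ∀ ω, 0 ≤ X ω ∧ X ω ≤ 1) (hXaesm : AEStronglyMeasurable X P)
    (asm₁ : AEStronglyMeasurable Y₁ P) (asm₂ : AEStronglyMeasurable Y₂ P)
    (hb₁ : ∀ᵐ ω ∂P, 0 ≤ Y₁ ω ∧ Y₁ ω ≤ 1) (hb₂ : ∀ᵐ ω ∂P, 0 ≤ Y₂ ω ∧ Y₂ ω ≤ 1)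
    (hIX : ∫ ω, X ω ∂P = p) (hIXX : ∫ ω, X ω * X ω ∂P = p)
    (hIY1 : ∫ ω, Y₁ ω ∂P = p) (hIY2 : ∫ ω, Y₂ ω ∂P = p)
    (hJ1 : ∫ ω, Y₁ ω * X ω ∂P = ∫ ω, Y₁ ω * Y₁ ω ∂P)
    (hJ2 : ∫ ω, Y₂ ω * X ω ∂P = ∫ ω, Y₂ ω * Y₂ ω ∂P) :
    (α ≥ max 0 (2 * β) → (α, β) ≠ (0, 0) →
      ∫ ω, (α * (Y₁ ω - Y₂ ω) ^ 2 + β * (Y₁ ω + Y₂ ω - 2 * p) ^ 2) ∂P ≤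
        α ^ 2 / (α - β) * (p * (1 - p))) ∧
    (¬ (α ≥ max 0 (2 * β)) →
      ∫ ω, (α * (Y₁ ω - Y₂ ω) ^ 2 + β * (Y₁ ω + Y₂ ω - 2 * p) ^ 2) ∂P ≤
        max 0 (max (4 * β) (α + β)) * (p * (1 - p))) ∧
    (α ≥ max 0 (2 * β) → α > 0 →
      (∫ ω, (α * (Y₁ ω - Y₂ ω) ^ 2 + β * (Y₁ ω + Y₂ ω - 2 * p) ^ 2) ∂P =
        α ^ 2 / (α - β) * (p * (1 - p)) ↔
      ∀ᵐ ω ∂P, (Y₁ ω - p) + (Y₂ ω - p) = α / (α - β) * (X ω - p))) := by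
  -- generic integrability helper
  have intb : ∀ (f : Ω → ℝ) (C : ℝ), AEStronglyMeasurable f P →
      (∀ᵐ ω ∂P, |f ω| ≤ C) → Integrable f P := fun f C hf h =>
    (integrable_const C).mono' hf (by simpa [Real.norm_eq_abs] using h)
  -- master a.e. bounds
  have hmb : ∀ᵐ ω ∂P, |Y₁ ω| ≤ 1 ∧ |Y₂ ω| ≤ 1 ∧ |X ω| ≤ 1 ∧ |X ω - p| ≤ 1 ∧
      |Y₁ ω + Y₂ ω - 2*p| ≤ 2 ∧ |Y₁ ω - p| ≤ 1 ∧ |Y₂ ω - p| ≤ 1 := by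
    filter_upwards [hb₁, hb₂] with ω h1 h2
    obtain ⟨hx0, hx1⟩ := hXb ω
    refine ⟨?_, ?_, ?_, ?_, ?_, ?_, ?_⟩ <;> rw [abs_le] <;> constructor <;>
      linarith [h1.1, h1.2, h2.1, h2.2]
  have sqb : ∀ (x C : ℝ), |x| ≤ C → |x^2| ≤ C^2 := fun x C h => by
    rw [abs_pow]; exact pow_le_pow_left₀ (abs_nonneg x) h 2
  have mulb : ∀ (x y Cx Cy : ℝ), |x| ≤ Cx → |y| ≤ Cy → |x*y| ≤ Cx*Cy :=
    fun x y Cx Cy h1 h2 => by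
      rw [abs_mul]
      exact mul_le_mul h1 h2 (abs_nonneg _) ((abs_nonneg _).trans h1)
  -- integrability bricks
  have hi_X : Integrable X P := intb _ 1 hXaesm (by filter_upwards [hmb] with ω h; exact h.2.2.1)
  have hi_Y1 : Integrable Y₁ P := intb _ 1 asm₁ (by filter_upwards [hmb] with ω h; exact h.1)
  have hi_Y2 : Integrable Y₂ P := intb _ 1 asm₂ (by filter_upwards [hmb] with ω h; exact h.2.1)
  have hi_XX : Integrable (fun ω => X ω * X ω) P :=
    intb _ 1 (hXaesm.mul hXaesm)
      (by filter_upwards [hmb] with ω h; simpa using mulb _ _ 1 1 h.2.2.1 h.2.2.1)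
  have hi_Y1Y1 : Integrable (fun ω => Y₁ ω * Y₁ ω) P :=
    intb _ 1 (asm₁.mul asm₁)
      (by filter_upwards [hmb] with ω h; simpa using mulb _ _ 1 1 h.1 h.1)
  have hi_Y2Y2 : Integrable (fun ω => Y₂ ω * Y₂ ω) P :=
    intb _ 1 (asm₂.mul asm₂)
      (by filter_upwards [hmb] with ω h; simpa using mulb _ _ 1 1 h.2.1 h.2.1)
  have hi_Y1X : Integrable (fun ω => Y₁ ω * X ω) P :=
    intb _ 1 (asm₁.mul hXaesm)
      (by filter_upwards [hmb] with ω h; simpa using mulb _ _ 1 1 h.1 h.2.2.1)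
  have hi_Y2X : Integrable (fun ω => Y₂ ω * X ω) P :=
    intb _ 1 (asm₂.mul hXaesm)
      (by filter_upwards [hmb] with ω h; simpa using mulb _ _ 1 1 h.2.1 h.2.2.1)
  have asm_a : AEStronglyMeasurable (fun ω => Y₁ ω - p) P := asm₁.sub aestronglyMeasurable_const
  have asm_b : AEStronglyMeasurable (fun ω => Y₂ ω - p) P := asm₂.sub aestronglyMeasurable_const
  have asm_Z : AEStronglyMeasurable (fun ω => X ω - p) P := hXaesm.sub aestronglyMeasurable_const
  have asm_s : AEStronglyMeasurable (fun ω => Y₁ ω + Y₂ ω - 2*p) P :=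
    (asm₁.add asm₂).sub aestronglyMeasurable_const
  have hi_a2 : Integrable (fun ω => (Y₁ ω - p)^2) P :=
    intb _ 1 ((asm_a.mul asm_a).congr (ae_of_all _ fun ω => (pow_two _).symm))
      (by filter_upwards [hmb] with ω h; simpa using sqb _ 1 h.2.2.2.2.2.1)
  have hi_b2 : Integrable (fun ω => (Y₂ ω - p)^2) P :=
    intb _ 1 ((asm_b.mul asm_b).congr (ae_of_all _ fun ω => (pow_two _).symm))
      (by filter_upwards [hmb] with ω h; simpa using sqb _ 1 h.2.2.2.2.2.2)
  have hi_aZ : Integrable (fun ω => (Y₁ ω - p) * (X ω - p)) P :=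
    intb _ 1 (asm_a.mul asm_Z)
      (by filter_upwards [hmb] with ω h; simpa using mulb _ _ 1 1 h.2.2.2.2.2.1 h.2.2.2.1)
  have hi_bZ : Integrable (fun ω => (Y₂ ω - p) * (X ω - p)) P :=
    intb _ 1 (asm_b.mul asm_Z)
      (by filter_upwards [hmb] with ω h; simpa using mulb _ _ 1 1 h.2.2.2.2.2.2 h.2.2.2.1)
  have hi_sZ : Integrable (fun ω => (Y₁ ω + Y₂ ω - 2*p) * (X ω - p)) P :=
    intb _ 2 (asm_s.mul asm_Z)
      (by filter_upwards [hmb] with ω h; simpa using mulb _ _ 2 1 h.2.2.2.2.1 h.2.2.2.1)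
  have hi_s2 : Integrable (fun ω => (Y₁ ω + Y₂ ω - 2*p)^2) P :=
    intb _ 4 ((asm_s.mul asm_s).congr (ae_of_all _ fun ω => (pow_two _).symm))
      (by filter_upwards [hmb] with ω h
          have h4 := sqb _ 2 h.2.2.2.2.1
          rw [abs_of_nonneg (sq_nonneg _)] at h4 ⊢
          norm_num at h4 ⊢
          linarith)
  have hi_Z2 : Integrable (fun ω => (X ω - p)^2) P :=
    intb _ 1 ((asm_Z.mul asm_Z).congr (ae_of_all _ fun ω => (pow_two _).symm))
      (by filter_upwards [hmb] with ω h; simpa using sqb _ 1 h.2.2.2.1)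
  have hi_d2 : Integrable (fun ω => (Y₁ ω - Y₂ ω)^2) P := by
    have asm_d : AEStronglyMeasurable (fun ω => Y₁ ω - Y₂ ω) P := asm₁.sub asm₂
    refine intb _ 4 ((asm_d.mul asm_d).congr (ae_of_all _ fun ω => (pow_two _).symm)) ?_
    filter_upwards [hmb] with ω h
    have hd : |Y₁ ω - Y₂ ω| ≤ 2 := by
      have := abs_sub_abs_le_abs_sub (Y₁ ω) (Y₂ ω)
      calc |Y₁ ω - Y₂ ω| ≤ |Y₁ ω| + |Y₂ ω| := abs_sub _ _
        _ ≤ 2 := by linarith [h.1, h.2.1]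
    have h4 := sqb _ 2 hd
    rw [abs_of_nonneg (sq_nonneg _)] at h4 ⊢
    norm_num at h4 ⊢
    linarith
  have hi_K1 : Integrable (fun ω => (Y₁ ω - p) * (Y₁ ω - X ω)) P :=
    intb _ 2 (asm_a.mul (asm₁.sub hXaesm))
      (by filter_upwards [hmb] with ω h
          have hd : |Y₁ ω - X ω| ≤ 2 := by
            calc |Y₁ ω - X ω| ≤ |Y₁ ω| + |X ω| := abs_sub _ _
              _ ≤ 2 := by linarith [h.1, h.2.2.1]
          simpa using mulb _ _ 1 2 h.2.2.2.2.2.1 hd)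
  have hi_K2 : Integrable (fun ω => (Y₂ ω - p) * (Y₂ ω - X ω)) P :=
    intb _ 2 (asm_b.mul (asm₂.sub hXaesm))
      (by filter_upwards [hmb] with ω h
          have hd : |Y₂ ω - X ω| ≤ 2 := by
            calc |Y₂ ω - X ω| ≤ |Y₂ ω| + |X ω| := abs_sub _ _
              _ ≤ 2 := by linarith [h.2.1, h.2.2.1]
          simpa using mulb _ _ 1 2 h.2.2.2.2.2.2 hd)
  have hi_W2 : ∀ c : ℝ, Integrable
      (fun ω => ((Y₁ ω + Y₂ ω - 2*p) - c * (X ω - p))^2) P := by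
    intro c
    have asm_W : AEStronglyMeasurable (fun ω => (Y₁ ω + Y₂ ω - 2*p) - c * (X ω - p)) P :=
      asm_s.sub (asm_Z.const_mul c)
    refine intb _ ((2 + |c|)^2) ((asm_W.mul asm_W).congr (ae_of_all _ fun ω => (pow_two _).symm)) ?_
    filter_upwards [hmb] with ω h
    have hW : |(Y₁ ω + Y₂ ω - 2*p) - c * (X ω - p)| ≤ 2 + |c| := by
      calc |(Y₁ ω + Y₂ ω - 2*p) - c * (X ω - p)| ≤
          |Y₁ ω + Y₂ ω - 2*p| + |c * (X ω - p)| := abs_sub _ _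
        _ ≤ 2 + |c| := by
            have := mulb c (X ω - p) |c| 1 le_rfl h.2.2.2.1
            rw [mul_one] at this
            linarith [h.2.2.2.2.1]
    exact sqb _ _ hW
  have hi_tsZ : ∀ t : ℝ, Integrable
      (fun ω => (t * (Y₁ ω + Y₂ ω - 2*p) - (X ω - p))^2) P := by
    intro t
    have asm_W : AEStronglyMeasurable (fun ω => t * (Y₁ ω + Y₂ ω - 2*p) - (X ω - p)) P :=
      (asm_s.const_mul t).sub asm_Z
    refine intb _ ((2*|t| + 1)^2) ((asm_W.mul asm_W).congr (ae_of_all _ fun ω => (pow_two _).symm)) ?_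
    filter_upwards [hmb] with ω h
    have hW : |t * (Y₁ ω + Y₂ ω - 2*p) - (X ω - p)| ≤ 2*|t| + 1 := by
      calc |t * (Y₁ ω + Y₂ ω - 2*p) - (X ω - p)| ≤
          |t * (Y₁ ω + Y₂ ω - 2*p)| + |X ω - p| := abs_sub _ _
        _ ≤ 2*|t| + 1 := by
            have := mulb t (Y₁ ω + Y₂ ω - 2*p) |t| 2 le_rfl h.2.2.2.2.1
            linarith [h.2.2.2.1]
    exact sqb _ _ hW
  -- key integral identities
  have hK1 : ∫ ω, (Y₁ ω - p) * (Y₁ ω - X ω) ∂P = 0 := by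
    have e : (fun ω => (Y₁ ω - p) * (Y₁ ω - X ω)) =
        fun ω => (Y₁ ω * Y₁ ω - Y₁ ω * X ω) - (p * Y₁ ω - p * X ω) := funext fun ω => by ring
    have hq1 : Integrable (fun ω => Y₁ ω * Y₁ ω - Y₁ ω * X ω) P := by exact hi_Y1Y1.sub hi_Y1X
    have hq2 : Integrable (fun ω => p * Y₁ ω - p * X ω) P := by
      exact (hi_Y1.const_mul p).sub (hi_X.const_mul p)
    rw [e, integral_sub hq1 hq2,
      integral_sub hi_Y1Y1 hi_Y1X, integral_sub (hi_Y1.const_mul p) (hi_X.const_mul p),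
      integral_const_mul, integral_const_mul, hJ1, hIY1, hIX]
    ring
  have hK2 : ∫ ω, (Y₂ ω - p) * (Y₂ ω - X ω) ∂P = 0 := by
    have e : (fun ω => (Y₂ ω - p) * (Y₂ ω - X ω)) =
        fun ω => (Y₂ ω * Y₂ ω - Y₂ ω * X ω) - (p * Y₂ ω - p * X ω) := funext fun ω => by ring
    have hq1 : Integrable (fun ω => Y₂ ω * Y₂ ω - Y₂ ω * X ω) P := by exact hi_Y2Y2.sub hi_Y2X
    have hq2 : Integrable (fun ω => p * Y₂ ω - p * X ω) P := by
      exact (hi_Y2.const_mul p).sub (hi_X.const_mul p)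
    rw [e, integral_sub hq1 hq2,
      integral_sub hi_Y2Y2 hi_Y2X, integral_sub (hi_Y2.const_mul p) (hi_X.const_mul p),
      integral_const_mul, integral_const_mul, hJ2, hIY2, hIX]
    ring
  have haZ : ∫ ω, (Y₁ ω - p) * (X ω - p) ∂P = ∫ ω, (Y₁ ω - p)^2 ∂P := by
    have e : (fun ω => (Y₁ ω - p) * (X ω - p)) =
        fun ω => (Y₁ ω - p)^2 - (Y₁ ω - p) * (Y₁ ω - X ω) := funext fun ω => by ring
    rw [e, integral_sub hi_a2 hi_K1, hK1, sub_zero]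
  have hbZ : ∫ ω, (Y₂ ω - p) * (X ω - p) ∂P = ∫ ω, (Y₂ ω - p)^2 ∂P := by
    have e : (fun ω => (Y₂ ω - p) * (X ω - p)) =
        fun ω => (Y₂ ω - p)^2 - (Y₂ ω - p) * (Y₂ ω - X ω) := funext fun ω => by ring
    rw [e, integral_sub hi_b2 hi_K2, hK2, sub_zero]
  have hu_eq : ∫ ω, (Y₁ ω + Y₂ ω - 2*p) * (X ω - p) ∂P
      = ∫ ω, (Y₁ ω - p)^2 ∂P + ∫ ω, (Y₂ ω - p)^2 ∂P := by
    have e : (fun ω => (Y₁ ω + Y₂ ω - 2*p) * (X ω - p)) =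
        fun ω => (Y₁ ω - p) * (X ω - p) + (Y₂ ω - p) * (X ω - p) := funext fun ω => by ring
    rw [e, integral_add hi_aZ hi_bZ, haZ, hbZ]
  have hIZ2 : ∫ ω, (X ω - p)^2 ∂P = p * (1-p) := by
    have e : (fun ω => (X ω - p)^2) =
        fun ω => (X ω * X ω - 2*p * X ω) + p^2 := funext fun ω => by ring
    have hq3 : Integrable (fun ω => X ω * X ω - 2*p * X ω) P := by
      exact hi_XX.sub (hi_X.const_mul (2*p))
    rw [e, integral_add hq3 (integrable_const _),
      integral_sub hi_XX (hi_X.const_mul (2*p)), integral_const_mul, integral_const, hIXX, hIX]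
    simp [measure_univ]
    ring
  -- abbreviations
  set u : ℝ := ∫ ω, (Y₁ ω + Y₂ ω - 2*p) * (X ω - p) ∂P with hu_def
  set S : ℝ := ∫ ω, (Y₁ ω + Y₂ ω - 2*p)^2 ∂P with hS_def
  have hσ : 0 < p * (1 - p) := mul_pos hp0 (by linarith)
  have hSnn : 0 ≤ S := integral_nonneg fun ω => sq_nonneg _
  have hunn : 0 ≤ u := by
    rw [hu_eq]
    exact add_nonneg (integral_nonneg fun ω => sq_nonneg _) (integral_nonneg fun ω => sq_nonneg _)
  have hS2u : S ≤ 2 * u := by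
    have h1 : S ≤ ∫ ω, (2*(Y₁ ω - p)^2 + 2*(Y₂ ω - p)^2) ∂P := by
      refine integral_mono hi_s2 ((hi_a2.const_mul 2).add (hi_b2.const_mul 2)) fun ω => ?_
      nlinarith [sq_nonneg (Y₁ ω - Y₂ ω)]
    rw [integral_add (hi_a2.const_mul 2) (hi_b2.const_mul 2), integral_const_mul,
      integral_const_mul] at h1
    rw [hu_eq]; linarith
  have hCS : u^2 ≤ S * (p * (1-p)) := by
    have hq : ∀ t : ℝ, 0 ≤ S * (t*t) + (-(2*u)) * t + p*(1-p) := by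
      intro t
      have e : (fun ω => (t * (Y₁ ω + Y₂ ω - 2*p) - (X ω - p))^2) =
          fun ω => ((t*t) * (Y₁ ω + Y₂ ω - 2*p)^2
            - (2*t) * ((Y₁ ω + Y₂ ω - 2*p) * (X ω - p))) + (X ω - p)^2 :=
        funext fun ω => by ring
      have h0 : (0:ℝ) ≤ ∫ ω, (t * (Y₁ ω + Y₂ ω - 2*p) - (X ω - p))^2 ∂P :=
        integral_nonneg fun ω => sq_nonneg _
      have hq4 : Integrable (fun ω => (t*t) * (Y₁ ω + Y₂ ω - 2*p)^2
          - (2*t) * ((Y₁ ω + Y₂ ω - 2*p) * (X ω - p))) P := by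
        exact (hi_s2.const_mul (t*t)).sub (hi_sZ.const_mul (2*t))
      rw [e, integral_add hq4 hi_Z2,
        integral_sub (hi_s2.const_mul _) (hi_sZ.const_mul _), integral_const_mul,
        integral_const_mul, hIZ2] at h0
      rw [← hu_def, ← hS_def] at h0
      nlinarith [h0]
    have h := discrim_le_zero hq
    rw [discrim] at h
    nlinarith [h]
  -- main identity: ∫ G = 2α u - (α-β) S
  have hkey : ∫ ω, (α * (Y₁ ω - Y₂ ω) ^ 2 + β * (Y₁ ω + Y₂ ω - 2 * p) ^ 2) ∂P
      = 2*α * u - (α - β) * S := by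
    have e : (fun ω => α * (Y₁ ω - Y₂ ω) ^ 2 + β * (Y₁ ω + Y₂ ω - 2 * p) ^ 2) =
        fun ω => (2*α * ((Y₁ ω + Y₂ ω - 2*p) * (X ω - p))
            - (α - β) * (Y₁ ω + Y₂ ω - 2*p)^2)
          + (2*α * ((Y₁ ω - p) * (Y₁ ω - X ω)) + 2*α * ((Y₂ ω - p) * (Y₂ ω - X ω))) :=
      funext fun ω => by ring
    have hqL : Integrable (fun ω => 2*α * ((Y₁ ω + Y₂ ω - 2*p) * (X ω - p))
        - (α - β) * (Y₁ ω + Y₂ ω - 2*p)^2) P := by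
      exact (hi_sZ.const_mul (2*α)).sub (hi_s2.const_mul (α-β))
    have hqR : Integrable (fun ω => 2*α * ((Y₁ ω - p) * (Y₁ ω - X ω))
        + 2*α * ((Y₂ ω - p) * (Y₂ ω - X ω))) P := by
      exact (hi_K1.const_mul (2*α)).add (hi_K2.const_mul (2*α))
    rw [e, integral_add hqL hqR,
      integral_add (hi_K1.const_mul (2*α)) (hi_K2.const_mul (2*α)),
      integral_sub (hi_sZ.const_mul _) (hi_s2.const_mul _),
      integral_const_mul, integral_const_mul, integral_const_mul, integral_const_mul, hK1, hK2,
      ← hu_def, ← hS_def]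
    ring
  -- identity for case 1 / case 3
  have hid : α - β ≠ 0 →
      2*α * u - (α - β) * S = α^2/(α-β) * (p*(1-p))
        - (α-β) * (∫ ω, ((Y₁ ω + Y₂ ω - 2*p) - α/(α-β) * (X ω - p))^2 ∂P) := by
    intro hab
    have e : (fun ω => 2*α * ((Y₁ ω + Y₂ ω - 2*p) * (X ω - p))
          - (α - β) * (Y₁ ω + Y₂ ω - 2*p)^2) =
        fun ω => α^2/(α-β) * (X ω - p)^2
          - (α-β) * ((Y₁ ω + Y₂ ω - 2*p) - α/(α-β) * (X ω - p))^2 :=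
      funext fun ω => by field_simp; ring
    have h1 : ∫ ω, (2*α * ((Y₁ ω + Y₂ ω - 2*p) * (X ω - p))
          - (α - β) * (Y₁ ω + Y₂ ω - 2*p)^2) ∂P = 2*α * u - (α - β) * S := by
      rw [integral_sub (hi_sZ.const_mul _) (hi_s2.const_mul _), integral_const_mul,
        integral_const_mul, ← hu_def, ← hS_def]
    rw [← h1, e, integral_sub (hi_Z2.const_mul (α^2/(α-β))) ((hi_W2 (α/(α-β))).const_mul (α-β)),
      integral_const_mul, integral_const_mul, hIZ2]
  refine ⟨?_, ?_, ?_⟩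
  · -- Part 1
    intro hα hne
    obtain ⟨h0α, h2β⟩ := max_le_iff.mp hα
    have hab : 0 < α - β := by
      rcases lt_or_eq_of_le h0α with hpos | hzero
      · linarith
      · have hβne : β ≠ 0 := fun hβ => hne (by rw [← hzero, hβ])
        have hβ0 : β < 0 := lt_of_le_of_ne (by linarith) hβne
        linarith
    have hWnn : 0 ≤ ∫ ω, ((Y₁ ω + Y₂ ω - 2*p) - α/(α-β) * (X ω - p))^2 ∂P :=
      integral_nonneg fun ω => sq_nonneg _
    rw [hkey, hid hab.ne']
    nlinarith [mul_nonneg hab.le hWnn]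
  · -- Part 2
    intro hn
    have hcase : α < 0 ∨ α < 2*β := lt_max_iff.mp (not_le.mp hn)
    have hu2σ : u ≤ 2*(p*(1-p)) := by
      by_contra hcon
      push_neg at hcon
      have h1 : u^2 ≤ 2*u*(p*(1-p)) := by nlinarith [hCS, hS2u, hσ]
      nlinarith [hσ, hunn]
    have hRmax : (0:ℝ) ≤ max 0 (max (4 * β) (α + β)) := le_max_left _ _
    have hR4β : 4*β ≤ max 0 (max (4 * β) (α + β)) :=
      (le_max_left _ _).trans (le_max_right _ _)
    rw [hkey]
    rcases le_total β α with hba | hab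
    · rcases hcase with hα0 | hα2β
      · nlinarith [mul_nonneg (sub_nonneg.2 hba) hSnn, mul_nonneg (neg_nonneg.2 hα0.le) hunn,
          mul_nonneg hRmax hσ.le]
      · have hβpos : 0 < β := by linarith
        have h1 : 0 ≤ (2*(p*(1-p)) - u) * (2*β*(p*(1-p)) - (α-β)*u) := by
          refine mul_nonneg (by linarith) ?_
          have h2 : (α-β)*u ≤ (α-β)*(2*(p*(1-p))) :=
            mul_le_mul_of_nonneg_left hu2σ (by linarith)
          nlinarith [hσ]
        have h2 : 0 ≤ (α-β)*(S*(p*(1-p)) - u^2) :=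
          mul_nonneg (by linarith) (by linarith [hCS])
        have hmain : 2*α*u - (α-β)*S ≤ 4*β*(p*(1-p)) := by nlinarith [h1, h2, hσ]
        nlinarith [mul_le_mul_of_nonneg_right hR4β hσ.le]
    · have h3 : 0 ≤ (β-α)*(2*u - S) := mul_nonneg (by linarith) (by linarith)
      rcases le_or_gt β 0 with hβ0 | hβpos
      · nlinarith [mul_nonneg hRmax hσ.le, mul_nonneg (neg_nonneg.2 hβ0) hunn]
      · have h4 : 2*β*u ≤ 2*β*(2*(p*(1-p))) :=
          mul_le_mul_of_nonneg_left hu2σ (by linarith)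
        nlinarith [mul_le_mul_of_nonneg_right hR4β hσ.le]
  · -- Part 3
    intro hα hα0
    obtain ⟨h0α, h2β⟩ := max_le_iff.mp hα
    have hab : 0 < α - β := by linarith
    have hWint := hi_W2 (α/(α-β))
    have hWiff : (∫ ω, ((Y₁ ω + Y₂ ω - 2*p) - α/(α-β) * (X ω - p))^2 ∂P) = 0 ↔
        (fun ω => ((Y₁ ω + Y₂ ω - 2*p) - α/(α-β) * (X ω - p))^2) =ᵐ[P] 0 :=
      integral_eq_zero_iff_of_nonneg (fun ω => sq_nonneg _) hWint
    rw [hkey, hid hab.ne']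
    constructor
    · intro h
      have hWnn : 0 ≤ ∫ ω, ((Y₁ ω + Y₂ ω - 2*p) - α/(α-β) * (X ω - p))^2 ∂P :=
        integral_nonneg fun ω => sq_nonneg _
      have h0 : (∫ ω, ((Y₁ ω + Y₂ ω - 2*p) - α/(α-β) * (X ω - p))^2 ∂P) = 0 := by
        have hprod : (α-β) * (∫ ω, ((Y₁ ω + Y₂ ω - 2*p) - α/(α-β) * (X ω - p))^2 ∂P) = 0 := by
          linarith
        rcases mul_eq_zero.mp hprod with h' | h'
        · exact absurd h' hab.ne'
        · exact h'
      filter_upwards [hWiff.mp h0] with ω hω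
      have hω' : ((Y₁ ω + Y₂ ω - 2*p) - α/(α-β) * (X ω - p))^2 = 0 := hω
      have := pow_eq_zero_iff (n := 2) (by norm_num) |>.mp hω'
      linarith
    · intro h
      have h0 : (fun ω => ((Y₁ ω + Y₂ ω - 2*p) - α/(α-β) * (X ω - p))^2) =ᵐ[P] 0 := by
        filter_upwards [h] with ω hω
        have : (Y₁ ω + Y₂ ω - 2*p) - α/(α-β) * (X ω - p) = 0 := by linarith
        simp [this]
      rw [hWiff.mpr h0]
      ring

/-- bounds on `E[α(X₁−X₂)² + β(X₁+X₂−2p)²]` for a coherent pair with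
mean `p`, and the characterization of equality in the case `α ≥ max(0, 2β)`, `α > 0`:
the bound `(α²/(α−β))·p(1−p)` is attained iff `(X₁−p)+(X₂−p) = (α/(α−β))(X−p)` a.s. -/
theorem stmt2 (p : ℝ) (hp : p ∈ Set.Ioo (0 : ℝ) 1) (α β : ℝ)
    {Ω : Type} [mΩ : MeasurableSpace Ω] (P : Measure Ω) [IsProbabilityMeasure P]
    (X : Ω → ℝ) (hXmeas : Measurable X) (hX01 : ∀ ω, X ω = 0 ∨ X ω = 1)
    (hXp : P {ω | X ω = 1} = ENNReal.ofReal p)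
    (m₁ m₂ : MeasurableSpace Ω) (hm₁ : m₁ ≤ mΩ) (hm₂ : m₂ ≤ mΩ) :
    (α ≥ max 0 (2 * β) → (α, β) ≠ (0, 0) →
      ∫ ω, (α * ((P[X|m₁]) ω - (P[X|m₂]) ω) ^ 2
          + β * ((P[X|m₁]) ω + (P[X|m₂]) ω - 2 * p) ^ 2) ∂P ≤
        α ^ 2 / (α - β) * (p * (1 - p))) ∧
    (¬ (α ≥ max 0 (2 * β)) →
      ∫ ω, (α * ((P[X|m₁]) ω - (P[X|m₂]) ω) ^ 2
          + β * ((P[X|m₁]) ω + (P[X|m₂]) ω - 2 * p) ^ 2) ∂P ≤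
        max 0 (max (4 * β) (α + β)) * (p * (1 - p))) ∧
    (α ≥ max 0 (2 * β) → α > 0 →
      (∫ ω, (α * ((P[X|m₁]) ω - (P[X|m₂]) ω) ^ 2
          + β * ((P[X|m₁]) ω + (P[X|m₂]) ω - 2 * p) ^ 2) ∂P =
        α ^ 2 / (α - β) * (p * (1 - p)) ↔
      ∀ᵐ ω ∂P, ((P[X|m₁]) ω - p) + ((P[X|m₂]) ω - p) = α / (α - β) * (X ω - p))) := by
  obtain ⟨hp0, hp1⟩ := hp
  have hXb : ∀ ω, 0 ≤ X ω ∧ X ω ≤ 1 := by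
    intro ω; rcases hX01 ω with h | h <;> simp [h]
  have hXint : Integrable X P := by
    refine (integrable_const (1:ℝ)).mono' hXmeas.aestronglyMeasurable ?_
    exact ae_of_all _ fun ω => by
      rw [Real.norm_eq_abs, abs_le]; constructor <;> linarith [(hXb ω).1, (hXb ω).2]
  have hIX : ∫ ω, X ω ∂P = p := bernoulli_integral (mΩ := mΩ) P X hXmeas hX01 p hp0.le hXp
  have hIXX : ∫ ω, X ω * X ω ∂P = p := by
    have e : (fun ω => X ω * X ω) = X := funext fun ω => by rcases hX01 ω with h | h <;> simp [h]
    rw [e, hIX]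
  obtain ⟨asm₁, hb₁, hIY1, hJ1⟩ := condexp_facts (mΩ := mΩ) P X hXmeas hXint hXb m₁ hm₁
  obtain ⟨asm₂, hb₂, hIY2, hJ2⟩ := condexp_facts (mΩ := mΩ) P X hXmeas hXint hXb m₂ hm₂
  exact core (mΩ := mΩ) P p α β hp0 hp1 X (P[X|m₁]) (P[X|m₂]) hXb
    hXmeas.aestronglyMeasurable asm₁ asm₂ hb₁ hb₂ hIX hIXX (hIY1.trans hIX) (hIY2.trans hIX)
    hJ1 hJ2
end

section
/- Let p ∈ (0,1), let α, β be real numbers with α ≥ max(0, 2β) and (α,β) ≠ (0,0), and set f(x₁,x₂) = α(x₁−x₂)² + β(x₁+x₂−2p)². Then for every coherent distribution μ with mean p, ∫ f dμ ≤ p(1−p)·α²/(α−β). -/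
open MeasureTheory

/-- A coherent pair of predictions with prior `p`: a probability space carrying a
Bernoulli random variable `X` with `ℙ(X = 1) = p` and two sub-σ-algebras `m₁, m₂`. -/
structure CoherentPair (p : ℝ) where
  (Ω : Type)
  [mΩ : MeasurableSpace Ω]
  (P : Measure Ω)
  [probP : IsProbabilityMeasure P]
  (X : Ω → ℝ)
  (m₁ m₂ : MeasurableSpace Ω)
  (measurable_X : Measurable X)
  (bernoulli_X : ∀ ω, X ω = 0 ∨ X ω = 1)
  (mean_X : P {ω | X ω = 1} = ENNReal.ofReal p)
  (le₁ : m₁ ≤ mΩ)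
  (le₂ : m₂ ≤ mΩ)

attribute [instance] CoherentPair.mΩ CoherentPair.probP

/-- The first expert's prediction `X₁ = E[X | m₁]`. -/
noncomputable def CoherentPair.X₁ {p : ℝ} (c : CoherentPair p) : c.Ω → ℝ :=
  MeasureTheory.condExp c.m₁ c.P c.X

/-- The second expert's prediction `X₂ = E[X | m₂]`. -/
noncomputable def CoherentPair.X₂ {p : ℝ} (c : CoherentPair p) : c.Ω → ℝ :=
  MeasureTheory.condExp c.m₂ c.P c.X

/-- A measure on `ℝ²` is a coherent distribution with mean `p` if it is the joint
distribution of `(X₁, X₂)` for some coherent pair with prior `p`. -/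
def IsCoherentDistr (p : ℝ) (μ : Measure (ℝ × ℝ)) : Prop :=
  ∃ c : CoherentPair p, μ = Measure.map (fun ω => (c.X₁ ω, c.X₂ ω)) c.P

/-- Basic properties of the conditional expectation of a Bernoulli variable. -/
lemma coherent_condexp_props {Ω : Type} [mΩ : MeasurableSpace Ω] (P : Measure Ω)
    [IsProbabilityMeasure P] (X : Ω → ℝ) (hX : Measurable[mΩ] X)
    (hber : ∀ ω, X ω = 0 ∨ X ω = 1) {m : MeasurableSpace Ω} (hm : m ≤ mΩ) :
    Measurable[mΩ] (P[X|m]) ∧ (∀ᵐ ω ∂P, |(P[X|m]) ω| ≤ 1) ∧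
      (∫ ω, (P[X|m]) ω ∂P = ∫ ω, X ω ∂P) ∧
      (∫ ω, (P[X|m]) ω * X ω ∂P = ∫ ω, (P[X|m]) ω * (P[X|m]) ω ∂P) := by
  have hX01 : ∀ ω, 0 ≤ X ω ∧ X ω ≤ 1 := fun ω => by
    rcases hber ω with h | h <;> rw [h] <;> norm_num
  have hXbd : ∀ᵐ ω ∂P, ‖X ω‖ ≤ 1 := ae_of_all _ fun ω => by
    rw [Real.norm_eq_abs, abs_le]
    exact ⟨by linarith [(hX01 ω).1], (hX01 ω).2⟩
  have hXint : Integrable X P := ⟨hX.aestronglyMeasurable, HasFiniteIntegral.of_bounded hXbd⟩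
  have hmeas : Measurable[mΩ] (P[X|m]) := (stronglyMeasurable_condExp.mono hm).measurable
  have h0 : 0 ≤ᵐ[P] P[X|m] := condExp_nonneg (ae_of_all _ fun ω => (hX01 ω).1)
  have h1 : P[X|m] ≤ᵐ[P] fun _ => (1 : ℝ) := by
    have h2 : P[X|m] ≤ᵐ[P] P[fun _ => (1 : ℝ)|m] := condExp_mono hXint (integrable_const 1) (ae_of_all _ fun ω => (hX01 ω).2)
    rwa [condExp_const (μ := P) hm (1 : ℝ)] at h2
  have hbd : ∀ᵐ ω ∂P, |(P[X|m]) ω| ≤ 1 := by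
    filter_upwards [h0, h1] with ω u v
    rw [abs_le]
    exact ⟨le_trans (by norm_num) u, v⟩
  have hmul_int : Integrable (P[X|m] * X) P := by
    refine ⟨(hmeas.mul hX).aestronglyMeasurable, HasFiniteIntegral.of_bounded (C := 1) ?_⟩
    filter_upwards [hbd] with ω h
    have h2 := hX01 ω
    rw [Pi.mul_apply, Real.norm_eq_abs, abs_mul]
    calc |(P[X|m]) ω| * |X ω| ≤ 1 * 1 := by
          apply mul_le_mul h _ (abs_nonneg _) zero_le_one
          rw [abs_le]; exact ⟨by linarith [h2.1], h2.2⟩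
      _ = 1 := mul_one 1
  refine ⟨hmeas, hbd, integral_condExp hm, ?_⟩
  calc ∫ ω, (P[X|m]) ω * X ω ∂P = ∫ ω, (P[X|m] * X) ω ∂P := rfl
    _ = ∫ ω, (P[(P[X|m] * X)|m]) ω ∂P := (integral_condExp hm).symm
    _ = ∫ ω, (P[X|m] * P[X|m]) ω ∂P := by
        refine integral_congr_ae ?_
        exact condExp_mul_of_stronglyMeasurable_left stronglyMeasurable_condExp hmul_int hXint
    _ = ∫ ω, (P[X|m]) ω * (P[X|m]) ω ∂P := rfl

/-- The mean of a `{0,1}`-valued random variable. -/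
lemma bern_integral {Ω : Type} [mΩ : MeasurableSpace Ω] (P : Measure Ω)
    [IsProbabilityMeasure P] (X : Ω → ℝ) (hX : Measurable[mΩ] X)
    (hber : ∀ ω, X ω = 0 ∨ X ω = 1) {p : ℝ} (hp0 : 0 ≤ p)
    (hmean : P {ω | X ω = 1} = ENNReal.ofReal p) : ∫ ω, X ω ∂P = p := by
  have hset : MeasurableSet {ω | X ω = 1} := hX (measurableSet_singleton 1)
  have hXeq : X = Set.indicator {ω | X ω = 1} 1 := by
    funext ω
    by_cases hmem : ω ∈ {ω | X ω = 1}
    · rw [Set.indicator_of_mem hmem]; exact hmem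
    · rw [Set.indicator_of_notMem hmem]
      rcases hber ω with h | h
      · exact h
      · exact absurd h hmem
  rw [hXeq, integral_indicator_one hset, measureReal_def, hmean, ENNReal.toReal_ofReal hp0]

/-- for `α ≥ max(0, 2β)`, `(α,β) ≠ (0,0)`, every coherent distribution
`μ` with mean `p` satisfies `∫ α(x₁−x₂)² + β(x₁+x₂−2p)² dμ ≤ p(1−p)·α²/(α−β)`. -/
theorem stmt4 (p : ℝ) (hp : p ∈ Set.Ioo (0 : ℝ) 1) (α β : ℝ)
    (hα : α ≥ max 0 (2 * β)) (hne : (α, β) ≠ (0, 0))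
    (μ : Measure (ℝ × ℝ)) (hμ : IsCoherentDistr p μ) :
    ∫ x, (α * (x.1 - x.2) ^ 2 + β * (x.1 + x.2 - 2 * p) ^ 2) ∂μ ≤
      p * (1 - p) * (α ^ 2 / (α - β)) := by
  obtain ⟨hp0, hp1⟩ := hp
  obtain ⟨c, rfl⟩ := hμ
  have hα0 : (0 : ℝ) ≤ α := le_trans (le_max_left _ _) hα
  have hβα : 2 * β ≤ α := le_trans (le_max_right _ _) hα
  by_cases hA : α = 0
  · -- degenerate case: the integrand is nonpositive and the bound is 0
    subst hA
    have hβ0 : β ≤ 0 := by linarith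
    have h0 : (0 : ℝ) ^ 2 / (0 - β) = 0 := by norm_num
    rw [h0, mul_zero]
    refine integral_nonpos fun x => ?_
    have h1 := sq_nonneg (x.1 + x.2 - 2 * p)
    have h2 := sq_nonneg (x.1 - x.2)
    show (0 : ℝ) * (x.1 - x.2) ^ 2 + β * (x.1 + x.2 - 2 * p) ^ 2 ≤ 0
    nlinarith
  · have hαpos : 0 < α := lt_of_le_of_ne hα0 (Ne.symm hA)
    have hXm : Measurable c.X := c.measurable_X.mono c.le₂ le_rfl
    have hDpos : 0 < α - β := by linarith
    have hαne : α ≠ 0 := ne_of_gt hαpos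
    have hDne : α - β ≠ 0 := ne_of_gt hDpos
    -- properties of the two conditional expectations
    obtain ⟨m1meas, m1bd, m1int, m1mul⟩ :=
      coherent_condexp_props c.P c.X hXm c.bernoulli_X c.le₁
    obtain ⟨m2meas, m2bd, m2int, m2mul⟩ :=
      coherent_condexp_props c.P c.X hXm c.bernoulli_X c.le₂
    have hX1meas : Measurable c.X₁ := m1meas
    have hX2meas : Measurable c.X₂ := m2meas
    have hX1bd : ∀ᵐ ω ∂c.P, |c.X₁ ω| ≤ 1 := m1bd
    have hX2bd : ∀ᵐ ω ∂c.P, |c.X₂ ω| ≤ 1 := m2bd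
    have hXbd : ∀ ω, |c.X ω| ≤ 1 := fun ω => by
      rcases c.bernoulli_X ω with h | h <;> rw [h] <;> norm_num
    -- the mean of X
    have hEX : ∫ ω, c.X ω ∂c.P = p :=
      bern_integral c.P c.X hXm c.bernoulli_X hp0.le c.mean_X
    have hEX1 : ∫ ω, c.X₁ ω ∂c.P = p := by
      have : ∫ ω, c.X₁ ω ∂c.P = ∫ ω, c.X ω ∂c.P := m1int
      rw [this, hEX]
    have hEX2 : ∫ ω, c.X₂ ω ∂c.P = p := by
      have : ∫ ω, c.X₂ ω ∂c.P = ∫ ω, c.X ω ∂c.P := m2int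
      rw [this, hEX]
    have hU1 : ∫ ω, c.X₁ ω * c.X ω ∂c.P = ∫ ω, c.X₁ ω * c.X₁ ω ∂c.P := m1mul
    have hU2 : ∫ ω, c.X₂ ω * c.X ω ∂c.P = ∫ ω, c.X₂ ω * c.X₂ ω ∂c.P := m2mul
    have hXX : ∫ ω, c.X ω * c.X ω ∂c.P = ∫ ω, c.X ω ∂c.P := by
      refine integral_congr_ae (ae_of_all _ fun ω => ?_)
      rcases c.bernoulli_X ω with h | h <;> simp [h]
    -- integrability of all the products involved
    have ibdd : ∀ (f : c.Ω → ℝ) (C : ℝ), Measurable f → (∀ᵐ ω ∂c.P, |f ω| ≤ C) →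
        Integrable f c.P := fun f C hf hC =>
      ⟨hf.aestronglyMeasurable, HasFiniteIntegral.of_bounded
        (by simpa [Real.norm_eq_abs] using hC)⟩
    have iX : Integrable c.X c.P := ibdd _ 1 hXm (ae_of_all _ hXbd)
    have iX1 : Integrable c.X₁ c.P := ibdd _ 1 hX1meas hX1bd
    have iX2 : Integrable c.X₂ c.P := ibdd _ 1 hX2meas hX2bd
    have hprodbd : ∀ a b : ℝ, |a| ≤ 1 → |b| ≤ 1 → |a * b| ≤ 1 := fun a b ha hb => by
      rw [abs_mul]
      calc |a| * |b| ≤ 1 * 1 := mul_le_mul ha hb (abs_nonneg _) zero_le_one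
        _ = 1 := mul_one 1
    have iX1X : Integrable (fun ω => c.X₁ ω * c.X ω) c.P := by
      refine ibdd _ 1 (hX1meas.mul hXm) ?_
      filter_upwards [hX1bd] with ω h using hprodbd _ _ h (hXbd ω)
    have iX2X : Integrable (fun ω => c.X₂ ω * c.X ω) c.P := by
      refine ibdd _ 1 (hX2meas.mul hXm) ?_
      filter_upwards [hX2bd] with ω h using hprodbd _ _ h (hXbd ω)
    have iX1X1 : Integrable (fun ω => c.X₁ ω * c.X₁ ω) c.P := by
      refine ibdd _ 1 (hX1meas.mul hX1meas) ?_
      filter_upwards [hX1bd] with ω h using hprodbd _ _ h h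
    have iX2X2 : Integrable (fun ω => c.X₂ ω * c.X₂ ω) c.P := by
      refine ibdd _ 1 (hX2meas.mul hX2meas) ?_
      filter_upwards [hX2bd] with ω h using hprodbd _ _ h h
    have iXX : Integrable (fun ω => c.X ω * c.X ω) c.P := by
      refine ibdd _ 1 (hXm.mul hXm) ?_
      exact ae_of_all _ fun ω => hprodbd _ _ (hXbd ω) (hXbd ω)
    -- the key auxiliary constants
    set l : ℝ := (α - β) / α with hl
    set k : ℝ := p * (1 - 2 * l) with hk
    set C1 : ℝ := α ^ 2 / (α - β) * (1 - 2 * k) with hC1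
    set C2 : ℝ := -4 * β * p + 2 * k * α with hC2
    set C0 : ℝ := 4 * β * p ^ 2 + k ^ 2 * α ^ 2 / (α - β) with hC0
    -- integrability of Y²
    have mY : Measurable (fun ω => c.X ω - l * (c.X₁ ω + c.X₂ ω) - k) :=
      ((hXm.sub ((hX1meas.add hX2meas).const_mul l)).sub measurable_const)
    have iY2 : Integrable (fun ω => (c.X ω - l * (c.X₁ ω + c.X₂ ω) - k) ^ 2) c.P := by
      refine ibdd _ ((1 + |l| * 2 + |k|) ^ 2) (mY.pow_const 2) ?_
      filter_upwards [hX1bd, hX2bd] with ω h1 h2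
      have hb : |c.X ω - l * (c.X₁ ω + c.X₂ ω) - k| ≤ 1 + |l| * 2 + |k| := by
        have t1 : |l * (c.X₁ ω + c.X₂ ω)| ≤ |l| * 2 := by
          rw [abs_mul]
          refine mul_le_mul_of_nonneg_left ?_ (abs_nonneg l)
          calc |c.X₁ ω + c.X₂ ω| ≤ |c.X₁ ω| + |c.X₂ ω| := abs_add_le _ _
            _ ≤ 2 := by linarith
        calc |c.X ω - l * (c.X₁ ω + c.X₂ ω) - k|
            ≤ |c.X ω - l * (c.X₁ ω + c.X₂ ω)| + |k| := abs_sub _ _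
          _ ≤ |c.X ω| + |l * (c.X₁ ω + c.X₂ ω)| + |k| := by
              have := abs_sub (c.X ω) (l * (c.X₁ ω + c.X₂ ω)); linarith
          _ ≤ 1 + |l| * 2 + |k| := by linarith [hXbd ω]
      calc |(c.X ω - l * (c.X₁ ω + c.X₂ ω) - k) ^ 2|
          = |c.X ω - l * (c.X₁ ω + c.X₂ ω) - k| ^ 2 := by rw [abs_pow]
        _ ≤ (1 + |l| * 2 + |k|) ^ 2 := by
            apply pow_le_pow_left₀ (abs_nonneg _) hb
    have hK : 0 ≤ ∫ ω, (c.X ω - l * (c.X₁ ω + c.X₂ ω) - k) ^ 2 ∂c.P :=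
      integral_nonneg fun ω => sq_nonneg _
    -- rewrite the integral over the pushforward
    have hmapeq : ∫ x, (α * (x.1 - x.2) ^ 2 + β * (x.1 + x.2 - 2 * p) ^ 2)
          ∂(Measure.map (fun ω => (c.X₁ ω, c.X₂ ω)) c.P)
        = ∫ ω, (α * (c.X₁ ω - c.X₂ ω) ^ 2 + β * (c.X₁ ω + c.X₂ ω - 2 * p) ^ 2) ∂c.P := by
      rw [integral_map (hX1meas.prodMk hX2meas).aemeasurable]
      exact Continuous.aestronglyMeasurable (by fun_prop)
    rw [hmapeq]
    -- pointwise algebraic identity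
    have hexp : ∫ ω, (α * (c.X₁ ω - c.X₂ ω) ^ 2 + β * (c.X₁ ω + c.X₂ ω - 2 * p) ^ 2) ∂c.P
        = ∫ ω, ((-2 * α) * (c.X₁ ω * c.X ω - c.X₁ ω * c.X₁ ω) +
            ((-2 * α) * (c.X₂ ω * c.X ω - c.X₂ ω * c.X₂ ω) +
            ((α ^ 2 / (α - β)) * (c.X ω * c.X ω - c.X ω) +
            ((-(α ^ 2 / (α - β))) * (c.X ω - l * (c.X₁ ω + c.X₂ ω) - k) ^ 2 +
            (C1 * c.X ω + (C2 * c.X₁ ω + (C2 * c.X₂ ω + C0))))))) ∂c.P := by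
      refine integral_congr_ae (ae_of_all _ fun ω => ?_)
      simp only [hC1, hC2, hC0, hk, hl]
      field_simp
      ring
    rw [hexp]
    -- split the integral
    have i1 : Integrable (fun ω => (-2 * α) * (c.X₁ ω * c.X ω - c.X₁ ω * c.X₁ ω)) c.P :=
      (iX1X.sub iX1X1).const_mul _
    have i2 : Integrable (fun ω => (-2 * α) * (c.X₂ ω * c.X ω - c.X₂ ω * c.X₂ ω)) c.P :=
      (iX2X.sub iX2X2).const_mul _
    have i3 : Integrable (fun ω => (α ^ 2 / (α - β)) * (c.X ω * c.X ω - c.X ω)) c.P :=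
      (iXX.sub iX).const_mul _
    have i4 : Integrable
        (fun ω => (-(α ^ 2 / (α - β))) * (c.X ω - l * (c.X₁ ω + c.X₂ ω) - k) ^ 2) c.P :=
      iY2.const_mul _
    have i5 : Integrable (fun ω => C1 * c.X ω) c.P := iX.const_mul _
    have i6 : Integrable (fun ω => C2 * c.X₁ ω) c.P := iX1.const_mul _
    have i7 : Integrable (fun ω => C2 * c.X₂ ω) c.P := iX2.const_mul _
    have i8 : Integrable (fun _ : c.Ω => C0) c.P := integrable_const _
    have i78 : Integrable (fun ω => C2 * c.X₂ ω + C0) c.P := i7.add i8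
    have i678 : Integrable (fun ω => C2 * c.X₁ ω + (C2 * c.X₂ ω + C0)) c.P := i6.add i78
    have i578 : Integrable (fun ω => C1 * c.X ω + (C2 * c.X₁ ω + (C2 * c.X₂ ω + C0))) c.P :=
      i5.add i678
    have i478 : Integrable (fun ω => (-(α ^ 2 / (α - β))) * (c.X ω - l * (c.X₁ ω + c.X₂ ω) - k) ^ 2 +
        (C1 * c.X ω + (C2 * c.X₁ ω + (C2 * c.X₂ ω + C0)))) c.P := i4.add i578
    have i378 : Integrable (fun ω => (α ^ 2 / (α - β)) * (c.X ω * c.X ω - c.X ω) +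
        ((-(α ^ 2 / (α - β))) * (c.X ω - l * (c.X₁ ω + c.X₂ ω) - k) ^ 2 +
        (C1 * c.X ω + (C2 * c.X₁ ω + (C2 * c.X₂ ω + C0))))) c.P := i3.add i478
    have i278 : Integrable (fun ω => (-2 * α) * (c.X₂ ω * c.X ω - c.X₂ ω * c.X₂ ω) +
        ((α ^ 2 / (α - β)) * (c.X ω * c.X ω - c.X ω) +
        ((-(α ^ 2 / (α - β))) * (c.X ω - l * (c.X₁ ω + c.X₂ ω) - k) ^ 2 +
        (C1 * c.X ω + (C2 * c.X₁ ω + (C2 * c.X₂ ω + C0)))))) c.P := i2.add i378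
    simp only [integral_add i1 i278, integral_add i2 i378, integral_add i3 i478,
        integral_add i4 i578, integral_add i5 i678, integral_add i6 i78, integral_add i7 i8,
        integral_const_mul, integral_sub iX1X iX1X1, integral_sub iX2X iX2X2,
        integral_sub iXX iX, hU1, hU2, hXX, hEX, hEX1, hEX2, integral_const]
    simp only [measure_univ, probReal_univ, ENNReal.toReal_one, smul_eq_mul, one_mul, sub_self, mul_zero]
    -- the scalar identity
    have hscalar : C1 * p + (C2 * p + (C2 * p + C0)) = p * (1 - p) * (α ^ 2 / (α - β)) := by
      simp only [hC1, hC2, hC0, hk, hl]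
      field_simp
      ring
    have hcd : 0 ≤ α ^ 2 / (α - β) := div_nonneg (sq_nonneg α) hDpos.le
    have hKK : -(α ^ 2 / (α - β)) * (∫ ω, (c.X ω - l * (c.X₁ ω + c.X₂ ω) - k) ^ 2 ∂c.P) ≤ 0 := by
      have := mul_nonneg hcd hK
      linarith
    linarith
end

section
/- Let X be a Bernoulli random variable with ℙ(X=1)=p on a probability space (Ω, F, ℙ), let F₁ ⊆ F be a sub-σ-algebra, and let X₁ = E[X | F₁]. If A is a Borel subset of ℝ with A ⊆ (0, +∞) and ℙ(X₁ ∈ A, X = 1) = 0, then ℙ(X₁ ∈ A, X = 0) = 0. If A is a Borel subset of ℝ with A ⊆ (−∞, 1) and ℙ(X₁ ∈ A, X = 0) = 0, then ℙ(X₁ ∈ A, X = 1) = 0. -/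
open MeasureTheory

lemma aux_null_of_setIntegral_zero {Ω : Type} [MeasurableSpace Ω] (P : Measure Ω)
    (f : Ω → ℝ) (B : Set Ω) (hf : IntegrableOn f B P)
    (h0 : 0 ≤ᵐ[P.restrict B] f) (hpos : ∀ ω ∈ B, 0 < f ω)
    (hint : ∫ x in B, f x ∂P = 0) : P B = 0 := by
  have hz : f =ᵐ[P.restrict B] 0 :=
    (MeasureTheory.setIntegral_eq_zero_iff_of_nonneg_ae h0 hf).mp hint
  have h1 : P.restrict B {x | ¬ f x = 0} = 0 := by
    have := hz
    rw [Filter.EventuallyEq, ae_iff] at this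
    simpa using this
  have hsub : B ⊆ {x | ¬ f x = 0} := fun ω hω => (hpos ω hω).ne'
  have h2 : P.restrict B B ≤ P.restrict B {x | ¬ f x = 0} := measure_mono hsub
  rw [h1, Measure.restrict_apply_self] at h2
  exact le_antisymm h2 zero_le

/-- for a Bernoulli random variable `X` with `ℙ(X=1) = p` and
`X₁ = E[X | m₁]`: if `A ⊆ (0, ∞)` is Borel and `ℙ(X₁ ∈ A, X = 1) = 0` then
`ℙ(X₁ ∈ A, X = 0) = 0`; if `A ⊆ (−∞, 1)` is Borel and `ℙ(X₁ ∈ A, X = 0) = 0`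
then `ℙ(X₁ ∈ A, X = 1) = 0`. -/
theorem stmt6 (p : ℝ)
    {Ω : Type} [mΩ : MeasurableSpace Ω] (P : Measure Ω) [IsProbabilityMeasure P]
    (X : Ω → ℝ) (hXmeas : Measurable X) (hX01 : ∀ ω, X ω = 0 ∨ X ω = 1)
    (hXp : P {ω | X ω = 1} = ENNReal.ofReal p)
    (m₁ : MeasurableSpace Ω) (hm₁ : m₁ ≤ mΩ)
    (A : Set ℝ) (hA : MeasurableSet A) :
    (A ⊆ Set.Ioi 0 →
      P ({ω | (P[X|m₁]) ω ∈ A} ∩ {ω | X ω = 1}) = 0 →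
      P ({ω | (P[X|m₁]) ω ∈ A} ∩ {ω | X ω = 0}) = 0) ∧
    (A ⊆ Set.Iio 1 →
      P ({ω | (P[X|m₁]) ω ∈ A} ∩ {ω | X ω = 0}) = 0 →
      P ({ω | (P[X|m₁]) ω ∈ A} ∩ {ω | X ω = 1}) = 0) := by
  letI : MeasurableSpace Ω := mΩ
  set Y := P[X|m₁] with hY
  set B := {ω | Y ω ∈ A} with hBdef
  set S1 := {ω | X ω = 1} with hS1def
  set S0 := {ω | X ω = 0} with hS0def
  have hS1 : MeasurableSet[mΩ] S1 := hXmeas (measurableSet_singleton 1)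
  have hS0 : MeasurableSet[mΩ] S0 := hXmeas (measurableSet_singleton 0)
  have hXint : Integrable X P := by
    apply Integrable.mono' (integrable_const (1:ℝ))
      hXmeas.aestronglyMeasurable
    filter_upwards with ω
    rcases hX01 ω with h | h <;> simp [h]
  have hBm1 : MeasurableSet[m₁] B :=
    (stronglyMeasurable_condExp.measurable) hA
  have hB : MeasurableSet[mΩ] B := hm₁ _ hBm1
  have hkey : ∫ x in B, Y x ∂P = ∫ x in B, X x ∂P :=
    setIntegral_condExp hm₁ hXint hBm1
  have hXind : X = S1.indicator (fun _ => (1:ℝ)) := by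
    funext ω
    rcases hX01 ω with h | h
    · simp [Set.indicator, hS1def, h]
    · simp [Set.indicator, hS1def, h]
  have hintX : ∫ x in B, X x ∂P = (P (B ∩ S1)).toReal := by
    rw [hXind, integral_indicator hS1, Measure.restrict_restrict hS1,
      setIntegral_const, smul_eq_mul, mul_one, Set.inter_comm, measureReal_def]
  have hpart : P B = P (B ∩ S1) + P (B ∩ S0) := by
    have hdisj : Disjoint (B ∩ S1) (B ∩ S0) := by
      intro s hs1 hs0 ω hω
      have h1 := hs1 hω
      have h0 := hs0 hω
      simp only [Set.mem_inter_iff, Set.mem_setOf_eq, hS1def, hS0def] at h1 h0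
      exfalso
      rw [h1.2] at h0
      norm_num at h0
    have hunion : B = (B ∩ S1) ∪ (B ∩ S0) := by
      ext ω
      rcases hX01 ω with h | h <;> simp [hS1def, hS0def, h]
    conv_lhs => rw [hunion]
    exact measure_union hdisj (hB.inter hS0)
  have hYint : IntegrableOn Y B P := integrable_condExp.integrableOn
  have hY0 : 0 ≤ᵐ[P] Y := condExp_nonneg (by
    filter_upwards with ω
    rcases hX01 ω with h | h <;> simp [h])
  have hY1 : Y ≤ᵐ[P] fun _ => (1:ℝ) := by
    have h1 : P[(fun _ => (1:ℝ))|m₁] = fun _ => (1:ℝ) := condExp_const hm₁ (1:ℝ)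
    have hle : Y ≤ᵐ[P] P[(fun _ => (1:ℝ))|m₁] := by
      apply condExp_mono hXint (integrable_const 1)
      filter_upwards with ω
      rcases hX01 ω with h | h <;> simp [h]
    rw [h1] at hle
    exact hle
  constructor
  · intro hAsub h1
    have hB0 : P B = 0 := by
      apply aux_null_of_setIntegral_zero P Y B hYint (ae_restrict_of_ae hY0)
      · intro ω hω
        exact hAsub hω
      · rw [hkey, hintX, h1]
        simp
    have hle : P (B ∩ S0) ≤ P B := measure_mono Set.inter_subset_left
    exact le_antisymm (hle.trans_eq hB0) zero_le
  · intro hAsub h0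
    have hPB : P B = P (B ∩ S1) := by rw [hpart, h0, add_zero]
    have hB0 : P B = 0 := by
      apply aux_null_of_setIntegral_zero P (fun ω => 1 - Y ω) B
        ((integrable_const (1:ℝ)).integrableOn.sub hYint)
      · apply ae_restrict_of_ae
        filter_upwards [hY1] with ω h
        simpa using h
      · intro ω hω
        have hlt : Y ω < 1 := hAsub hω
        simpa using hlt
      · rw [integral_sub (integrable_const (1:ℝ)).integrableOn hYint,
          hkey, hintX, setIntegral_const, smul_eq_mul, mul_one, ← hPB]
        exact sub_self _
    have hle : P (B ∩ S1) ≤ P B := measure_mono Set.inter_subset_left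
    exact le_antisymm (hle.trans_eq hB0) zero_le
end

section
/- Let a > 0, let p ∈ (0,1), let X be a Bernoulli random variable with ℙ(X=1)=p on a probability space (Ω, F, ℙ), let F₁, F₂ ⊆ F be sub-σ-algebras, X₁ = E[X|F₁], X₂ = E[X|F₂], and suppose (X₁ − p) + (X₂ − p) = a(X − p) almost surely. Let I be a Borel subset of the half-infinite interval (max(0, (2−a)p − 1), +∞) such that ℙ(X₁ ∈ I, X = 1) = 0. Then ℙ(X₁ ∈ I + ka, X = 1) = 0 for every integer k ≥ 0, where I + ka = {x + ka : x ∈ I}. -/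
open MeasureTheory

/-- if `(X₁−p)+(X₂−p) = a(X−p)` a.s. and `I` is a Borel subset of
`(max(0, (2−a)p−1), ∞)` with `ℙ(X₁ ∈ I, X = 1) = 0`, then
`ℙ(X₁ ∈ I + ka, X = 1) = 0` for every integer `k ≥ 0`. -/
theorem stmt7 (a p : ℝ) (ha : 0 < a) (hp : p ∈ Set.Ioo (0 : ℝ) 1)
    {Ω : Type} [mΩ : MeasurableSpace Ω] (P : Measure Ω) [IsProbabilityMeasure P]
    (X : Ω → ℝ) (hXmeas : Measurable X) (hX01 : ∀ ω, X ω = 0 ∨ X ω = 1)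
    (hXp : P {ω | X ω = 1} = ENNReal.ofReal p)
    (m₁ m₂ : MeasurableSpace Ω) (hm₁ : m₁ ≤ mΩ) (hm₂ : m₂ ≤ mΩ)
    (hsum : ∀ᵐ ω ∂P, ((P[X|m₁]) ω - p) + ((P[X|m₂]) ω - p) = a * (X ω - p))
    (I : Set ℝ) (hI : MeasurableSet I)
    (hIsub : I ⊆ Set.Ioi (max 0 ((2 - a) * p - 1)))
    (h0 : P ({ω | (P[X|m₁]) ω ∈ I} ∩ {ω | X ω = 1}) = 0) :
    ∀ k : ℕ,
      P ({ω | (P[X|m₁]) ω ∈ (fun x => x + (k : ℝ) * a) '' I} ∩ {ω | X ω = 1}) = 0 := by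
  letI : MeasurableSpace Ω := mΩ
  set S : Set Ω := {ω | X ω = 1} with hSdef
  have hS : MeasurableSet[mΩ] S := hXmeas (measurableSet_singleton 1)
  have hXind : X = S.indicator (fun _ => (1 : ℝ)) := by
    funext ω
    rcases hX01 ω with h | h
    · have hωS : ω ∉ S := by simp [hSdef, h]
      simp [Set.indicator_of_notMem hωS, h]
    · have hωS : ω ∈ S := h
      simp [Set.indicator_of_mem hωS, h]
  have hXint : Integrable X P := by
    rw [hXind]
    exact (integrable_const (1 : ℝ)).indicator hS
  -- positivity helper
  have haveZ : ∀ (f : Ω → ℝ) (A : Set Ω), MeasurableSet[mΩ] A → IntegrableOn f A P →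
      (∀ ω ∈ A, 0 < f ω) → (∫ ω in A, f ω ∂P) = 0 → P A = 0 := by
    intro f A hA hfint hfpos hint
    have h1 : 0 ≤ᵐ[P.restrict A] f :=
      (ae_restrict_iff' hA).mpr (ae_of_all _ fun ω hω => (hfpos ω hω).le)
    have h2 : P (Function.support f ∩ A) = 0 := by
      by_contra h
      have hpos : 0 < P (Function.support f ∩ A) := (zero_le).lt_of_ne (Ne.symm h)
      have := (setIntegral_pos_iff_support_of_nonneg_ae h1 hfint).2 hpos
      rw [hint] at this; exact lt_irrefl 0 this
    refine measure_mono_null (fun ω hω => ?_) h2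
    exact ⟨(hfpos ω hω).ne', hω⟩
  -- integral of X over a set
  have hintX : ∀ (A : Set Ω), MeasurableSet[mΩ] A →
      (∫ ω in A, X ω ∂P) = (P (A ∩ S)).toReal := by
    intro A hA
    rw [hXind, setIntegral_indicator hS]
    simp [Measure.real]
  -- step A : positive sets with null intersection with S are null
  have stepA : ∀ (m : MeasurableSpace Ω) (hm : m ≤ mΩ) (B : Set ℝ), MeasurableSet B →
      (∀ x ∈ B, 0 < x) → P ({ω | (P[X|m]) ω ∈ B} ∩ S) = 0 →
      P {ω | (P[X|m]) ω ∈ B} = 0 := by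
    intro m hm B hB hBpos hnull
    letI : MeasurableSpace Ω := mΩ
    set A : Set Ω := {ω | (P[X|m]) ω ∈ B} with hAdef
    have hAm : MeasurableSet[m] A := stronglyMeasurable_condExp.measurable hB
    have hA : MeasurableSet[mΩ] A := hm _ hAm
    have hint : (∫ ω in A, (P[X|m]) ω ∂P) = 0 := by
      rw [setIntegral_condExp hm hXint hAm, hintX A hA, hnull]
      simp
    exact haveZ _ A hA integrable_condExp.integrableOn (fun ω hω => hBpos _ hω) hint
  -- step B : sets below 1 with null intersection with Sᶜ have null intersection with S
  have stepB : ∀ (m : MeasurableSpace Ω) (hm : m ≤ mΩ) (B : Set ℝ), MeasurableSet B →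
      (∀ x ∈ B, x < 1) → P ({ω | (P[X|m]) ω ∈ B} ∩ Sᶜ) = 0 →
      P ({ω | (P[X|m]) ω ∈ B} ∩ S) = 0 := by
    intro m hm B hB hBlt hnullc
    letI : MeasurableSpace Ω := mΩ
    set A : Set Ω := {ω | (P[X|m]) ω ∈ B} with hAdef
    have hAm : MeasurableSet[m] A := stronglyMeasurable_condExp.measurable hB
    have hA : MeasurableSet[mΩ] A := hm _ hAm
    have hintA : (∫ ω in A, (X ω - (P[X|m]) ω) ∂P) = 0 := by
      rw [integral_sub hXint.integrableOn integrable_condExp.integrableOn,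
        setIntegral_condExp hm hXint hAm, sub_self]
    have hdiff : (∫ ω in A \ S, (X ω - (P[X|m]) ω) ∂P) = 0 := by
      apply setIntegral_measure_zero
      rw [Set.diff_eq]; exact hnullc
    have hsplit := integral_inter_add_diff (f := fun ω => X ω - (P[X|m]) ω) (s := A)
      hS ((hXint.sub integrable_condExp).integrableOn)
    have hintAS : (∫ ω in A ∩ S, (X ω - (P[X|m]) ω) ∂P) = 0 := by
      rw [hdiff, add_zero] at hsplit
      rw [hsplit, hintA]
    refine haveZ _ (A ∩ S) (hA.inter hS) ((hXint.sub integrable_condExp).integrableOn)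
      (fun ω hω => ?_) hintAS
    have h1 : X ω = 1 := hω.2
    have h2 : (P[X|m]) ω < 1 := hBlt _ hω.1
    simp only [Pi.sub_apply]
    linarith
  -- the a.e. linear relation, rearranged
  have hsum' : ∀ᵐ ω ∂P, (P[X|m₁]) ω + (P[X|m₂]) ω = a * X ω + (2 - a) * p := by
    filter_upwards [hsum] with ω h
    linear_combination h
  set N : Set Ω := {ω | ¬ ((P[X|m₁]) ω + (P[X|m₂]) ω = a * X ω + (2 - a) * p)} with hNdef
  have hN : P N = 0 := by
    rw [← ae_iff] at *
    exact hsum'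
  -- key inductive step
  have key : ∀ J : Set ℝ, MeasurableSet J → J ⊆ Set.Ioi (max 0 ((2 - a) * p - 1)) →
      P ({ω | (P[X|m₁]) ω ∈ J} ∩ S) = 0 →
      P ({ω | (P[X|m₁]) ω ∈ (fun x => x + a) '' J} ∩ S) = 0 := by
    intro J hJ hJsub hJ0
    have hJpos : ∀ x ∈ J, 0 < x := fun x hx =>
      lt_of_le_of_lt (le_max_left _ _) (hJsub hx)
    have step1 : P {ω | (P[X|m₁]) ω ∈ J} = 0 := stepA m₁ hm₁ J hJ hJpos hJ0
    set B : Set ℝ := (fun x => (2 - a) * p - x) ⁻¹' J with hBdef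
    have hB : MeasurableSet B := hJ.preimage (measurable_const.sub measurable_id)
    have hBlt : ∀ x ∈ B, x < 1 := by
      intro x hx
      have h1 : (2 - a) * p - x > max 0 ((2 - a) * p - 1) := hJsub hx
      have h2 := le_max_right (0 : ℝ) ((2 - a) * p - 1)
      linarith
    have hnullc : P ({ω | (P[X|m₂]) ω ∈ B} ∩ Sᶜ) = 0 := by
      refine measure_mono_null (fun ω hω => ?_)
        (measure_union_null step1 hN)
      rcases hω with ⟨hωB, hωS⟩
      by_cases hωN : ω ∈ N
      · exact Or.inr hωN
      · left
        have hrel : (P[X|m₁]) ω + (P[X|m₂]) ω = a * X ω + (2 - a) * p := not_not.mp hωN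
        have hX0 : X ω = 0 := by
          rcases hX01 ω with h | h
          · exact h
          · exact absurd h hωS
        have heq : (P[X|m₁]) ω = (2 - a) * p - (P[X|m₂]) ω := by
          rw [hX0] at hrel; linarith
        show (P[X|m₁]) ω ∈ J
        rw [heq]; exact hωB
    have step2 : P ({ω | (P[X|m₂]) ω ∈ B} ∩ S) = 0 := stepB m₂ hm₂ B hB hBlt hnullc
    refine measure_mono_null (fun ω hω => ?_)
      (measure_union_null step2 hN)
    rcases hω with ⟨hωJ, hωS⟩
    by_cases hωN : ω ∈ N
    · exact Or.inr hωN
    · left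
      have hrel : (P[X|m₁]) ω + (P[X|m₂]) ω = a * X ω + (2 - a) * p := not_not.mp hωN
      have hX1 : X ω = 1 := hωS
      rcases hωJ with ⟨j, hj, hjeq⟩
      refine ⟨show (P[X|m₂]) ω ∈ B from ?_, hX1⟩
      show (2 - a) * p - (P[X|m₂]) ω ∈ J
      have heq : (2 - a) * p - (P[X|m₂]) ω = j := by
        rw [hX1] at hrel; simp only at hjeq; linarith
      rw [heq]; exact hj
  -- subset condition for all k
  have hsub : ∀ k : ℕ, ((fun x => x + (k : ℝ) * a) '' I) ⊆ Set.Ioi (max 0 ((2 - a) * p - 1)) := by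
    rintro k x ⟨y, hy, rfl⟩
    have h1 : y > max 0 ((2 - a) * p - 1) := hIsub hy
    have h2 : (0 : ℝ) ≤ (k : ℝ) * a := by positivity
    simp only [Set.mem_Ioi] at *
    linarith
  -- measurability of the images
  have hmeasJ : ∀ k : ℕ, MeasurableSet ((fun x => x + (k : ℝ) * a) '' I) := by
    intro k
    have himg : (fun x : ℝ => x + (k : ℝ) * a) '' I = (fun x : ℝ => x - (k : ℝ) * a) ⁻¹' I := by
      ext x
      constructor
      · rintro ⟨y, hy, rfl⟩; simpa using hy
      · intro hx; exact ⟨x - (k : ℝ) * a, hx, by ring⟩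
    rw [himg]
    exact hI.preimage (measurable_id.sub measurable_const)
  intro k
  induction k with
  | zero =>
    have h00 : (fun x : ℝ => x + ((0 : ℕ) : ℝ) * a) '' I = I := by
      simp
    rw [h00]; exact h0
  | succ n ih =>
    have himg : (fun x : ℝ => x + a) '' ((fun x : ℝ => x + (n : ℝ) * a) '' I)
        = (fun x : ℝ => x + ((n + 1 : ℕ) : ℝ) * a) '' I := by
      have hfun : (fun x : ℝ => x + (n : ℝ) * a + a)
          = (fun x : ℝ => x + ((n + 1 : ℕ) : ℝ) * a) := by
        funext x; push_cast; ring
      rw [Set.image_image, hfun]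
    have hfin := key _ (hmeasJ n) (hsub n) ih
    rw [himg] at hfin
    exact hfin
end

section
/- Let p ∈ (0, 1/3]. Consider the probability space on three atoms ω₁, ω₂, ω₃ with ℙ(ω₁) = p, ℙ(ω₂) = ℙ(ω₃) = (1−p)/2, the Bernoulli random variable X with X(ω₁)=1, X(ω₂)=X(ω₃)=0, and the random variables X₁, X₂ with X₁(ω₁)=X₁(ω₃)=2p/(p+1), X₁(ω₂)=0, and X₂(ω₁)=X₂(ω₂)=2p/(p+1), X₂(ω₃)=0. Then X₁ = E[X | σ(X₁)], X₂ = E[X | σ(X₂)] (so (X₁,X₂) is a coherent pair with mean p), and cov(X₁, X₂) = −(p(1−p)/(p+1))². -/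
open MeasureTheory

noncomputable def Pm (p : ℝ) : Measure (Fin 3) :=
  ENNReal.ofReal p • Measure.dirac 0 +
    ENNReal.ofReal ((1 - p) / 2) • Measure.dirac 1 +
    ENNReal.ofReal ((1 - p) / 2) • Measure.dirac 2

theorem Pm_prob (p : ℝ) (hp : p ∈ Set.Ioc (0:ℝ) (1/3)) : IsProbabilityMeasure (Pm p) := by
  obtain ⟨hp0, hp1⟩ := hp
  constructor
  simp only [Pm, Measure.add_apply, Measure.smul_apply, measure_univ, smul_eq_mul, mul_one]
  rw [← ENNReal.ofReal_add (by linarith) (by linarith),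
    ← ENNReal.ofReal_add (by linarith) (by linarith),
    show p + (1-p)/2 + (1-p)/2 = 1 by ring, ENNReal.ofReal_one]

theorem Pm_integral (p : ℝ) (hp : p ∈ Set.Ioc (0:ℝ) (1/3)) (f : Fin 3 → ℝ) :
    ∫ x, f x ∂(Pm p) = p * f 0 + (1-p)/2 * f 1 + (1-p)/2 * f 2 := by
  obtain ⟨hp0, hp1⟩ := hp
  have : IsProbabilityMeasure (Pm p) := Pm_prob p ⟨hp0, hp1⟩
  rw [integral_fintype (Integrable.of_finite), Fin.sum_univ_three]
  simp only [measureReal_def, Pm, Measure.add_apply, Measure.smul_apply, Measure.dirac_apply,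
    Set.indicator_apply, Set.mem_singleton_iff, smul_eq_mul,
    show (0:Fin 3) ≠ 1 from by decide, show (0:Fin 3) ≠ 2 from by decide,
    show (1:Fin 3) ≠ 0 from by decide, show (1:Fin 3) ≠ 2 from by decide,
    show (2:Fin 3) ≠ 0 from by decide, show (2:Fin 3) ≠ 1 from by decide,
    if_true, if_false, Pi.one_apply, mul_one, mul_zero, add_zero, zero_add, if_pos rfl,
    ENNReal.toReal_ofReal hp0.le, ENNReal.toReal_ofReal (by linarith : (0:ℝ) ≤ (1-p)/2)]

theorem Pm_setIntegral (p : ℝ) (hp : p ∈ Set.Ioc (0:ℝ) (1/3)) (f : Fin 3 → ℝ)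
    (s : Set (Fin 3)) :
    ∫ x in s, f x ∂(Pm p) = p * Set.indicator s f 0 + (1-p)/2 * Set.indicator s f 1
      + (1-p)/2 * Set.indicator s f 2 := by
  rw [← integral_indicator (MeasurableSet.of_discrete)]
  exact Pm_integral p hp _

theorem cond_aux (p : ℝ) (hp : p ∈ Set.Ioc (0:ℝ) (1/3)) :
    (![2 * p / (p + 1), 0, 2 * p / (p + 1)] : Fin 3 → ℝ) =ᵐ[Pm p]
      (Pm p)[(![1, 0, 0] : Fin 3 → ℝ) |
        MeasurableSpace.comap ![2 * p / (p + 1), 0, 2 * p / (p + 1)] Real.measurableSpace] := by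
  obtain ⟨hp0, hp1⟩ := hp
  haveI : IsProbabilityMeasure (Pm p) := Pm_prob p ⟨hp0, hp1⟩
  set X₁ : Fin 3 → ℝ := ![2 * p / (p + 1), 0, 2 * p / (p + 1)] with hX₁
  have hm : MeasurableSpace.comap X₁ Real.measurableSpace ≤ _ :=
    (Measurable.of_discrete (f := X₁)).comap_le
  refine ae_eq_condExp_of_forall_setIntegral_eq hm Integrable.of_finite
    (fun s _ _ => Integrable.of_finite.integrableOn) ?_ ?_
  · rintro s ⟨B, -, rfl⟩ -
    rw [Pm_setIntegral p ⟨hp0, hp1⟩, Pm_setIntegral p ⟨hp0, hp1⟩]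
    simp only [Set.indicator_apply, Set.mem_preimage, hX₁,
      Matrix.cons_val_zero, Matrix.cons_val_one, Matrix.head_cons,
      Matrix.cons_val_two, Matrix.tail_cons]
    by_cases hB : 2 * p / (p + 1) ∈ B <;> by_cases h0 : (0:ℝ) ∈ B <;>
      simp [hB, h0] <;> field_simp <;> ring
  · exact ⟨X₁, (Measurable.of_comap_le le_rfl).stronglyMeasurable, ae_eq_refl _⟩

theorem cond_aux₂ (p : ℝ) (hp : p ∈ Set.Ioc (0:ℝ) (1/3)) :
    (![2 * p / (p + 1), 2 * p / (p + 1), 0] : Fin 3 → ℝ) =ᵐ[Pm p]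
      (Pm p)[(![1, 0, 0] : Fin 3 → ℝ) |
        MeasurableSpace.comap ![2 * p / (p + 1), 2 * p / (p + 1), 0] Real.measurableSpace] := by
  obtain ⟨hp0, hp1⟩ := hp
  haveI : IsProbabilityMeasure (Pm p) := Pm_prob p ⟨hp0, hp1⟩
  set X₂ : Fin 3 → ℝ := ![2 * p / (p + 1), 2 * p / (p + 1), 0] with hX₂
  have hm : MeasurableSpace.comap X₂ Real.measurableSpace ≤ _ :=
    (Measurable.of_discrete (f := X₂)).comap_le
  refine ae_eq_condExp_of_forall_setIntegral_eq hm Integrable.of_finite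
    (fun s _ _ => Integrable.of_finite.integrableOn) ?_ ?_
  · rintro s ⟨B, -, rfl⟩ -
    rw [Pm_setIntegral p ⟨hp0, hp1⟩, Pm_setIntegral p ⟨hp0, hp1⟩]
    simp only [Set.indicator_apply, Set.mem_preimage, hX₂,
      Matrix.cons_val_zero, Matrix.cons_val_one, Matrix.head_cons,
      Matrix.cons_val_two, Matrix.tail_cons]
    by_cases hB : 2 * p / (p + 1) ∈ B <;> by_cases h0 : (0:ℝ) ∈ B <;>
      simp [hB, h0] <;> field_simp <;> ring
  · exact ⟨X₂, (Measurable.of_comap_le le_rfl).stronglyMeasurable, ae_eq_refl _⟩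

theorem stmt10_aux (p : ℝ) (hp : p ∈ Set.Ioc (0 : ℝ) (1 / 3)) :
    let P : Measure (Fin 3) :=
      ENNReal.ofReal p • Measure.dirac 0 +
        ENNReal.ofReal ((1 - p) / 2) • Measure.dirac 1 +
        ENNReal.ofReal ((1 - p) / 2) • Measure.dirac 2
    let X : Fin 3 → ℝ := ![1, 0, 0]
    let X₁ : Fin 3 → ℝ := ![2 * p / (p + 1), 0, 2 * p / (p + 1)]
    let X₂ : Fin 3 → ℝ := ![2 * p / (p + 1), 2 * p / (p + 1), 0]
    IsProbabilityMeasure P ∧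
    P {ω | X ω = 1} = ENNReal.ofReal p ∧
    X₁ =ᵐ[P] P[X | MeasurableSpace.comap X₁ Real.measurableSpace] ∧
    X₂ =ᵐ[P] P[X | MeasurableSpace.comap X₂ Real.measurableSpace] ∧
    ∫ ω, (X₁ ω - p) * (X₂ ω - p) ∂P = -(p * (1 - p) / (p + 1)) ^ 2 := by
  intro P X X₁ X₂
  obtain ⟨hp0, hp1⟩ := hp
  have hP : P = Pm p := rfl
  refine ⟨Pm_prob p ⟨hp0, hp1⟩, ?_, cond_aux p ⟨hp0, hp1⟩, cond_aux₂ p ⟨hp0, hp1⟩, ?_⟩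
  · have hset : {ω | X ω = 1} = ({0} : Set (Fin 3)) := by
      ext ω
      fin_cases ω <;> simp [X]
    rw [hP, hset]
    simp [Pm, Measure.dirac_apply, Set.indicator_apply,
      show (1:Fin 3) ≠ 0 from by decide, show (2:Fin 3) ≠ 0 from by decide]
  · rw [hP, Pm_integral p ⟨hp0, hp1⟩]
    simp only [X₁, X₂, Matrix.cons_val_zero, Matrix.cons_val_one, Matrix.head_cons,
      Matrix.cons_val_two, Matrix.tail_cons]
    field_simp
    ring

/-- the explicit three-atom construction attaining the optimal
covariance for `p ∈ (0, 1/3]`: `X₁ = E[X | σ(X₁)]`, `X₂ = E[X | σ(X₂)]` and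
`cov(X₁, X₂) = −(p(1−p)/(p+1))²`. -/
theorem stmt10 (p : ℝ) (hp : p ∈ Set.Ioc (0 : ℝ) (1 / 3)) :
    let P : Measure (Fin 3) :=
      ENNReal.ofReal p • Measure.dirac 0 +
        ENNReal.ofReal ((1 - p) / 2) • Measure.dirac 1 +
        ENNReal.ofReal ((1 - p) / 2) • Measure.dirac 2
    let X : Fin 3 → ℝ := ![1, 0, 0]
    let X₁ : Fin 3 → ℝ := ![2 * p / (p + 1), 0, 2 * p / (p + 1)]
    let X₂ : Fin 3 → ℝ := ![2 * p / (p + 1), 2 * p / (p + 1), 0]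
    IsProbabilityMeasure P ∧
    P {ω | X ω = 1} = ENNReal.ofReal p ∧
    X₁ =ᵐ[P] P[X | MeasurableSpace.comap X₁ Real.measurableSpace] ∧
    X₂ =ᵐ[P] P[X | MeasurableSpace.comap X₂ Real.measurableSpace] ∧
    ∫ ω, (X₁ ω - p) * (X₂ ω - p) ∂P = -(p * (1 - p) / (p + 1)) ^ 2 :=
  stmt10_aux p hp
end

section
/- Let a ∈ [0,1] and α > 0. Consider the probability space on six atoms carrying a triple (X, X₁, X₂) with: ℙ(X=1, X₁=a, X₂=1) = ℙ(X=1, X₁=1, X₂=a) = a/(2(a+1)); ℙ(X=1, X₁=1−a, X₂=1−a) = (1−a)/(2(a+1)); ℙ(X=0, X₁=0, X₂=1−a) = ℙ(X=0, X₁=1−a, X₂=0) = a/(2(a+1)); ℙ(X=0, X₁=a, X₂=a) = (1−a)/(2(a+1)). Then X is Bernoulli with ℙ(X=1)=1/2, X₁ = E[X | σ(X₁)] and X₂ = E[X | σ(X₂)] (so (X₁,X₂) is a coherent pair with mean 1/2), and E[|X₁ − X₂|^α] = (1−a)^α · 2a/(a+1). -/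
open MeasureTheory

set_option maxHeartbeats 2000000 in
/-- the explicit six-atom construction for `p = 1/2`: the triple
`(X, X₁, X₂)` with the stated atom weights gives a Bernoulli `X` with
`ℙ(X=1) = 1/2`, `X₁ = E[X | σ(X₁)]`, `X₂ = E[X | σ(X₂)]`, and
`E[|X₁ − X₂|^α] = (1−a)^α · 2a/(a+1)`. -/
theorem stmt12 (a : ℝ) (ha : a ∈ Set.Icc (0 : ℝ) 1) (α : ℝ) (hα : 0 < α) :
    let P : Measure (Fin 6) :=
      ENNReal.ofReal (a / (2 * (a + 1))) •
          (Measure.dirac 0 + Measure.dirac 1 + Measure.dirac 3 + Measure.dirac 4) +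
        ENNReal.ofReal ((1 - a) / (2 * (a + 1))) • (Measure.dirac 2 + Measure.dirac 5)
    let X : Fin 6 → ℝ := ![1, 1, 1, 0, 0, 0]
    let X₁ : Fin 6 → ℝ := ![a, 1, 1 - a, 0, 1 - a, a]
    let X₂ : Fin 6 → ℝ := ![1, a, 1 - a, 1 - a, 0, a]
    IsProbabilityMeasure P ∧
    P {ω | X ω = 1} = ENNReal.ofReal (1 / 2) ∧
    X₁ =ᵐ[P] P[X | MeasurableSpace.comap X₁ Real.measurableSpace] ∧
    X₂ =ᵐ[P] P[X | MeasurableSpace.comap X₂ Real.measurableSpace] ∧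
    ∫ ω, |X₁ ω - X₂ ω| ^ α ∂P = (1 - a) ^ α * (2 * a / (a + 1)) := by
  intro P X X₁ X₂
  classical
  have ha0 := ha.1; have ha1 := ha.2
  have h1 : (0:ℝ) < a + 1 := by linarith
  have hw : 0 ≤ a / (2 * (a + 1)) := by positivity
  have hv : 0 ≤ (1 - a) / (2 * (a + 1)) := by apply div_nonneg <;> linarith
  -- values of the three random variables
  have hX0 : X 0 = 1 := rfl
  have hX1 : X 1 = 1 := rfl
  have hX2 : X 2 = 1 := rfl
  have hX3 : X 3 = 0 := rfl
  have hX4 : X 4 = 0 := rfl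
  have hX5 : X 5 = 0 := rfl
  have hA0 : X₁ 0 = a := rfl
  have hA1 : X₁ 1 = 1 := rfl
  have hA2 : X₁ 2 = 1 - a := rfl
  have hA3 : X₁ 3 = 0 := rfl
  have hA4 : X₁ 4 = 1 - a := rfl
  have hA5 : X₁ 5 = a := rfl
  have hB0 : X₂ 0 = 1 := rfl
  have hB1 : X₂ 1 = a := rfl
  have hB2 : X₂ 2 = 1 - a := rfl
  have hB3 : X₂ 3 = 1 - a := rfl
  have hB4 : X₂ 4 = 0 := rfl
  have hB5 : X₂ 5 = a := rfl
  -- probability measure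
  have hprob : IsProbabilityMeasure P := by
    constructor
    simp only [P, Measure.add_apply, Measure.smul_apply, smul_eq_mul, Measure.dirac_apply,
      Set.mem_univ, Set.indicator_of_mem, Pi.one_apply, mul_one]
    rw [show ((1:ENNReal)+1+1+1) = ENNReal.ofReal 4 by norm_num,
      show ((1:ENNReal)+1) = ENNReal.ofReal 2 by norm_num,
      ← ENNReal.ofReal_mul hw, ← ENNReal.ofReal_mul hv,
      ← ENNReal.ofReal_add (by positivity) (mul_nonneg hv (by norm_num)),
      ← ENNReal.ofReal_one]
    congr 1
    field_simp
    ring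
  haveI := hprob
  -- the basic integral formula
  have key : ∀ f : Fin 6 → ℝ, ∫ x, f x ∂P =
      a / (2 * (a + 1)) * (f 0 + f 1 + f 3 + f 4)
      + (1 - a) / (2 * (a + 1)) * (f 2 + f 5) := by
    intro f
    rw [integral_fintype (Integrable.of_finite)]
    simp +decide only [Fin.sum_univ_six, measureReal_def, P, Measure.add_apply, Measure.smul_apply, smul_eq_mul,
      Measure.dirac_apply, Set.indicator_apply, Set.mem_singleton_iff, Pi.one_apply,
      if_true, if_false, mul_one, mul_zero, add_zero, zero_add,
      ENNReal.toReal_ofReal hw, ENNReal.toReal_ofReal hv]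
    ring
  -- set integral formula
  have keyS : ∀ (f : Fin 6 → ℝ) (s : Set (Fin 6)), ∫ x in s, f x ∂P =
      a / (2 * (a + 1)) * ((if 0 ∈ s then f 0 else 0) + (if 1 ∈ s then f 1 else 0)
        + (if 3 ∈ s then f 3 else 0) + (if 4 ∈ s then f 4 else 0))
      + (1 - a) / (2 * (a + 1)) * ((if 2 ∈ s then f 2 else 0) + (if 5 ∈ s then f 5 else 0)) := by
    intro f s
    rw [← integral_indicator (by trivial), key]
    simp only [Set.indicator_apply]
  refine ⟨hprob, ?_, ?_, ?_, ?_⟩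
  · -- P {X = 1} = 1/2
    have hset : {ω | X ω = 1} = ({0, 1, 2} : Set (Fin 6)) := by
      ext ω; fin_cases ω <;>
        simp [X, show (![1,1,1,0,0,0] : Fin 6 → ℝ) 5 = 0 from rfl]
    rw [hset]
    simp only [P, Measure.add_apply, Measure.smul_apply, smul_eq_mul, Measure.dirac_apply,
      Set.indicator_apply, Set.mem_insert_iff, Set.mem_singleton_iff, Pi.one_apply]
    norm_num [show ¬((3:Fin 6) = 0 ∨ (3:Fin 6) = 1 ∨ (3:Fin 6) = 2) by decide,
      show ¬((4:Fin 6) = 0 ∨ (4:Fin 6) = 1 ∨ (4:Fin 6) = 2) by decide,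
      show ¬((5:Fin 6) = 0 ∨ (5:Fin 6) = 1 ∨ (5:Fin 6) = 2) by decide]
    rw [show ((2:ENNReal)) = ENNReal.ofReal 2 by norm_num,
      ← ENNReal.ofReal_mul hw,
      ← ENNReal.ofReal_add (by positivity) hv]
    congr 1
    field_simp
    ring
  · -- conditional expectation w.r.t. σ(X₁)
    refine ae_eq_condExp_of_forall_setIntegral_eq
      (Measurable.comap_le Measurable.of_discrete) Integrable.of_finite
      (fun s _ _ => Integrable.integrableOn Integrable.of_finite) ?_ ?_
    · rintro s ⟨B, hB, rfl⟩ -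
      have h05 : ((0:Fin 6) ∈ X₁ ⁻¹' B ↔ (5:Fin 6) ∈ X₁ ⁻¹' B) := by
        simp only [Set.mem_preimage, hA0, hA5]
      have h24 : ((2:Fin 6) ∈ X₁ ⁻¹' B ↔ (4:Fin 6) ∈ X₁ ⁻¹' B) := by
        simp only [Set.mem_preimage, hA2, hA4]
      rw [keyS, keyS]
      by_cases h0 : (0:Fin 6) ∈ X₁ ⁻¹' B <;>
        by_cases h1 : (1:Fin 6) ∈ X₁ ⁻¹' B <;>
        by_cases h2 : (2:Fin 6) ∈ X₁ ⁻¹' B <;>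
        by_cases h3 : (3:Fin 6) ∈ X₁ ⁻¹' B <;>
        simp only [← h05, ← h24, h0, h1, h2, h3, if_true, if_false,
          hX0, hX1, hX2, hX3, hX4, hX5, hA0, hA1, hA2, hA3, hA4, hA5] <;>
        ring
    · exact StronglyMeasurable.aestronglyMeasurable
        (Measurable.stronglyMeasurable (Measurable.of_comap_le le_rfl))
  · -- conditional expectation w.r.t. σ(X₂)
    refine ae_eq_condExp_of_forall_setIntegral_eq
      (Measurable.comap_le Measurable.of_discrete) Integrable.of_finite
      (fun s _ _ => Integrable.integrableOn Integrable.of_finite) ?_ ?_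
    · rintro s ⟨B, hB, rfl⟩ -
      have h15 : ((1:Fin 6) ∈ X₂ ⁻¹' B ↔ (5:Fin 6) ∈ X₂ ⁻¹' B) := by
        simp only [Set.mem_preimage, hB1, hB5]
      have h23 : ((2:Fin 6) ∈ X₂ ⁻¹' B ↔ (3:Fin 6) ∈ X₂ ⁻¹' B) := by
        simp only [Set.mem_preimage, hB2, hB3]
      rw [keyS, keyS]
      by_cases h0 : (0:Fin 6) ∈ X₂ ⁻¹' B <;>
        by_cases h1 : (1:Fin 6) ∈ X₂ ⁻¹' B <;>
        by_cases h2 : (2:Fin 6) ∈ X₂ ⁻¹' B <;>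
        by_cases h4 : (4:Fin 6) ∈ X₂ ⁻¹' B <;>
        simp only [← h15, ← h23, h0, h1, h2, h4, if_true, if_false,
          hX0, hX1, hX2, hX3, hX4, hX5, hB0, hB1, hB2, hB3, hB4, hB5] <;>
        ring
    · exact StronglyMeasurable.aestronglyMeasurable
        (Measurable.stronglyMeasurable (Measurable.of_comap_le le_rfl))
  · -- the moment computation
    rw [key]
    have habs : |a - 1| = 1 - a := by rw [abs_of_nonpos (by linarith)]; ring
    have habs2 : |1 - a| = 1 - a := abs_of_nonneg (by linarith)
    simp only [hA0, hA1, hA2, hA3, hA4, hA5, hB0, hB1, hB2, hB3, hB4, hB5,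
      sub_zero, zero_sub, abs_neg, sub_self, abs_zero, habs, habs2,
      Real.zero_rpow (ne_of_gt hα)]
    field_simp
    ring
end

section
/- Let X be a bounded random variable on a probability space (Ω, F, ℙ) and let f : ℝ² → ℝ be Lipschitz (with respect to the Euclidean metric on ℝ²). For sub-σ-algebras F₁, F₂ ⊆ F write X_{F_i} = E[X | F_i]. Then the supremum of E[f(X_{F₁}, X_{F₂})] over all pairs of sub-σ-algebras F₁, F₂ of F equals the supremum of E[f(X_{F₁}, X_{F₂})] over all pairs of finite sub-σ-algebras F₁, F₂ of F. -/
open MeasureTheory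

lemma comap_finite {Ω : Type} {m : MeasurableSpace Ω} {Z : Ω → ℝ}
    (hZ : Measurable[m] Z) (hfin : (Set.range Z).Finite) :
    MeasurableSpace.comap Z ⊤ ≤ m ∧
      {s | MeasurableSet[MeasurableSpace.comap Z ⊤] s}.Finite := by
  have key : ∀ B : Set ℝ, Z ⁻¹' B = Z ⁻¹' (B ∩ Set.range Z) := by
    intro B
    ext ω
    simp only [Set.mem_preimage, Set.mem_inter_iff, Set.mem_range]
    exact ⟨fun h => ⟨h, ω, rfl⟩, fun h => h.1⟩
  have hsub : {s | MeasurableSet[MeasurableSpace.comap Z ⊤] s} ⊆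
      (fun B => Z ⁻¹' B) '' {B | B ⊆ Set.range Z} := by
    rintro s ⟨B, -, rfl⟩
    exact ⟨B ∩ Set.range Z, Set.inter_subset_right, (key B).symm⟩
  refine ⟨?_, Set.Finite.subset (hfin.powerset.image _) hsub⟩
  rintro s ⟨B, -, rfl⟩
  rw [key]
  have : (B ∩ Set.range Z).Finite := hfin.subset Set.inter_subset_right
  have : Z ⁻¹' (B ∩ Set.range Z) = ⋃ v ∈ (B ∩ Set.range Z), Z ⁻¹' {v} := by
    ext ω; simp
  rw [this]
  exact Set.Finite.measurableSet_biUnion ‹(B ∩ Set.range Z).Finite›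
    fun v _ => hZ (measurableSet_singleton v)
open MeasureTheory

lemma disc_exists (C ε : ℝ) (hC : 0 ≤ C) (hε : 0 < ε) :
    ∃ q : ℝ → ℝ, Measurable q ∧ (Set.range q).Finite ∧
      (∀ x, |x| ≤ C → |q x - x| ≤ ε) ∧ (∀ x, |q x| ≤ C + ε) := by
  set clamp : ℝ → ℝ := fun x => max (-C) (min C x) with hclamp
  have hclamp_meas : Measurable clamp :=
    (measurable_const.max ((measurable_const.min measurable_id))).comp measurable_id
  set q : ℝ → ℝ := fun x => (⌊clamp x / ε⌋ : ℝ) * ε with hq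
  have hclamp_mem : ∀ x, -C ≤ clamp x ∧ clamp x ≤ C := by
    intro x
    constructor
    · exact le_max_left _ _
    · exact max_le (by linarith) (min_le_left _ _)
  have hqx : ∀ x, clamp x - ε < q x ∧ q x ≤ clamp x := by
    intro x
    constructor
    · have := Int.sub_one_lt_floor (clamp x / ε)
      have h2 : (clamp x / ε - 1) * ε < (⌊clamp x / ε⌋ : ℝ) * ε :=
        mul_lt_mul_of_pos_right this hε
      calc clamp x - ε = (clamp x / ε - 1) * ε := by field_simp
        _ < q x := h2
    · have := Int.floor_le (clamp x / ε)
      have h2 : (⌊clamp x / ε⌋ : ℝ) * ε ≤ (clamp x / ε) * ε :=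
        mul_le_mul_of_nonneg_right this hε.le
      calc q x ≤ (clamp x / ε) * ε := h2
        _ = clamp x := by field_simp
  refine ⟨q, ?_, ?_, ?_, ?_⟩
  · have h1 : Measurable fun x => (⌊clamp x / ε⌋ : ℝ) :=
      (measurable_from_top : Measurable (fun k : ℤ => (k:ℝ))).comp (Int.measurable_floor.comp (hclamp_meas.div_const ε))
    exact h1.mul_const ε
  · have : Set.range q ⊆ (fun k : ℤ => (k : ℝ) * ε) ''
        (Set.Icc ⌊-C / ε⌋ ⌊C / ε⌋ : Set ℤ) := by
      rintro - ⟨x, rfl⟩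
      refine ⟨⌊clamp x / ε⌋, ⟨Int.floor_le_floor ?_, Int.floor_le_floor ?_⟩, rfl⟩
      · exact div_le_div_of_nonneg_right (hclamp_mem x).1 hε.le
      · exact div_le_div_of_nonneg_right (hclamp_mem x).2 hε.le
    exact ((Set.finite_Icc _ _).image _).subset this
  · intro x hx
    have hcx : clamp x = x := by
      rw [hclamp]
      rw [abs_le] at hx
      simp only []
      rw [min_eq_right hx.2, max_eq_right hx.1]
    have := hqx x
    rw [hcx] at this
    rw [abs_le]
    constructor <;> linarith [this.1, this.2]
  · intro x
    have h1 := hqx x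
    have h2 := hclamp_mem x
    rw [abs_le]
    constructor <;> linarith [h1.1, h1.2, h2.1, h2.2]

lemma approx_condexp {Ω : Type} [mΩ : MeasurableSpace Ω] (P : Measure Ω)
    [IsProbabilityMeasure P]
    (X : Ω → ℝ) (hXmeas : Measurable X) (C : ℝ) (hC : 0 ≤ C)
    (hbdd : ∀ ω, |X ω| ≤ C)
    (m : MeasurableSpace Ω) (hm : m ≤ mΩ) (ε : ℝ) (hε : 0 < ε) :
    ∃ g : MeasurableSpace Ω, g ≤ mΩ ∧ {s | MeasurableSet[g] s}.Finite ∧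
      ∀ᵐ ω ∂P, |(P[X|g]) ω - (P[X|m]) ω| ≤ 2 * ε := by
  obtain ⟨q, hq_meas, hq_fin, hq_close, hq_bdd⟩ := disc_exists C ε hC hε
  set Y : Ω → ℝ := P[X|m] with hY
  have hXint : Integrable X P := by
    refine Integrable.mono' (integrable_const C) hXmeas.aestronglyMeasurable ?_
    exact ae_of_all P fun ω => by simpa using hbdd ω
  have hYsm : StronglyMeasurable[m] Y := stronglyMeasurable_condExp
  have hYbdd : ∀ᵐ ω ∂P, |Y ω| ≤ C := by
    have : ∀ᵐ ω ∂P, |X ω| ≤ (⟨C, hC⟩ : NNReal) :=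
      ae_of_all P fun ω => hbdd ω
    exact ae_bdd_condExp_of_ae_bdd this
  set Z : Ω → ℝ := fun ω => q (Y ω) with hZ
  have hZm : Measurable[m] Z := hq_meas.comp hYsm.measurable
  have hZrange : (Set.range Z).Finite :=
    hq_fin.subset (by rintro - ⟨ω, rfl⟩; exact ⟨Y ω, rfl⟩)
  obtain ⟨hg_le_m, hg_fin⟩ := comap_finite hZm hZrange
  set g : MeasurableSpace Ω := MeasurableSpace.comap Z ⊤ with hgdef
  have hg : g ≤ mΩ := hg_le_m.trans hm
  refine ⟨g, hg, hg_fin, ?_⟩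
  have h1 : P[X|g] =ᵐ[P] P[Y|g] := (condExp_condExp_of_le hg_le_m hm).symm
  have hZint : Integrable Z P := by
    refine Integrable.mono' (integrable_const (C + ε))
      ((hZm.mono hm le_rfl).stronglyMeasurable.aestronglyMeasurable) ?_
    exact ae_of_all P fun ω => by simpa using hq_bdd (Y ω)
  have hYint : Integrable Y P := integrable_condExp
  have hYZ : Y = Z + (Y - Z) := by ext ω; simp
  have h2 : P[Y|g] =ᵐ[P] P[Z|g] + P[Y - Z|g] := by
    nth_rewrite 1 [hYZ]
    exact condExp_add hZint (hYint.sub hZint) g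
  have hZg : Measurable[g] Z := fun s _ =>
    MeasurableSpace.measurableSet_comap.2 ⟨s, trivial, rfl⟩
  have h3 : P[Z|g] = Z :=
    condExp_of_stronglyMeasurable hg hZg.stronglyMeasurable hZint
  have h4 : ∀ᵐ ω ∂P, |(P[Y - Z|g]) ω| ≤ (⟨ε, hε.le⟩ : NNReal) := by
    refine ae_bdd_condExp_of_ae_bdd ?_
    filter_upwards [hYbdd] with ω hω
    have := hq_close (Y ω) hω
    simp only [Pi.sub_apply]
    rw [abs_sub_comm]
    exact this
  filter_upwards [h1, h2, h4, hYbdd] with ω e1 e2 e4 eb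
  rw [e1, e2]
  simp only [Pi.add_apply, h3]
  have hZY : |Z ω - Y ω| ≤ ε := hq_close (Y ω) eb
  have e4' : |(P[Y - Z|g]) ω| ≤ ε := e4
  calc |Z ω + (P[Y - Z|g]) ω - Y ω| = |(Z ω - Y ω) + (P[Y - Z|g]) ω| := by ring_nf
    _ ≤ |Z ω - Y ω| + |(P[Y - Z|g]) ω| := abs_add_le _ _
    _ ≤ 2 * ε := by linarith

lemma F_props {Ω : Type} [mΩ : MeasurableSpace Ω] (P : Measure Ω)
    [IsProbabilityMeasure P]
    (X : Ω → ℝ) (C : ℝ) (hC : 0 ≤ C) (hbdd : ∀ ω, |X ω| ≤ C)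
    (f : ℝ × ℝ → ℝ) (K : NNReal) (hf : LipschitzWith K f)
    (m₁ m₂ : MeasurableSpace Ω) (hm₁ : m₁ ≤ mΩ) (hm₂ : m₂ ≤ mΩ) :
    Integrable (fun ω => f ((P[X|m₁]) ω, (P[X|m₂]) ω)) P ∧
    (∀ᵐ ω ∂P, |f ((P[X|m₁]) ω, (P[X|m₂]) ω)| ≤ |f (0, 0)| + K * C) := by
  have hb : ∀ i : Fin 2, True := fun _ => trivial
  have hA1 : ∀ᵐ ω ∂P, |(P[X|m₁]) ω| ≤ (⟨C, hC⟩ : NNReal) :=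
    ae_bdd_condExp_of_ae_bdd (ae_of_all P fun ω => hbdd ω)
  have hA2 : ∀ᵐ ω ∂P, |(P[X|m₂]) ω| ≤ (⟨C, hC⟩ : NNReal) :=
    ae_bdd_condExp_of_ae_bdd (ae_of_all P fun ω => hbdd ω)
  have hbound : ∀ᵐ ω ∂P, |f ((P[X|m₁]) ω, (P[X|m₂]) ω)| ≤ |f (0, 0)| + K * C := by
    filter_upwards [hA1, hA2] with ω h1 h2
    have hd : dist (f ((P[X|m₁]) ω, (P[X|m₂]) ω)) (f (0, 0)) ≤
        K * dist (((P[X|m₁]) ω, (P[X|m₂]) ω)) ((0 : ℝ), (0 : ℝ)) :=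
      hf.dist_le_mul _ _
    have hdp : dist (((P[X|m₁]) ω, (P[X|m₂]) ω)) ((0 : ℝ), (0 : ℝ)) ≤ C := by
      rw [Prod.dist_eq]
      simp only [Real.dist_eq, sub_zero]
      exact max_le h1 h2
    have htri : |f ((P[X|m₁]) ω, (P[X|m₂]) ω)| - |f (0, 0)| ≤
        dist (f ((P[X|m₁]) ω, (P[X|m₂]) ω)) (f (0, 0)) := by
      rw [Real.dist_eq]; exact abs_sub_abs_le_abs_sub _ _
    nlinarith [K.coe_nonneg, hd, hdp, htri]
  refine ⟨?_, hbound⟩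
  have hsm : AEStronglyMeasurable (m := mΩ) (fun ω => f ((P[X|m₁]) ω, (P[X|m₂]) ω)) P := by
    have h1 : StronglyMeasurable[mΩ] (P[X|m₁]) :=
      (stronglyMeasurable_condExp : StronglyMeasurable[m₁] (P[X|m₁])).mono hm₁
    have h2 : StronglyMeasurable[mΩ] (P[X|m₂]) :=
      (stronglyMeasurable_condExp : StronglyMeasurable[m₂] (P[X|m₂])).mono hm₂
    exact (hf.continuous.comp_stronglyMeasurable (h1.prodMk h2)).aestronglyMeasurable
  refine Integrable.mono' (integrable_const (|f (0, 0)| + K * C)) hsm ?_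
  filter_upwards [hbound] with ω h using by simpa using h

lemma F_diff {Ω : Type} [mΩ : MeasurableSpace Ω] (P : Measure Ω)
    [IsProbabilityMeasure P]
    (f : ℝ × ℝ → ℝ) (K : NNReal) (hf : LipschitzWith K f)
    (A₁ A₂ B₁ B₂ : Ω → ℝ) (δ : ℝ) (_hδ : 0 ≤ δ)
    (h1 : ∀ᵐ ω ∂P, |A₁ ω - B₁ ω| ≤ δ) (h2 : ∀ᵐ ω ∂P, |A₂ ω - B₂ ω| ≤ δ)
    (hiA : Integrable (fun ω => f (A₁ ω, A₂ ω)) P)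
    (hiB : Integrable (fun ω => f (B₁ ω, B₂ ω)) P) :
    |∫ ω, f (A₁ ω, A₂ ω) ∂P - ∫ ω, f (B₁ ω, B₂ ω) ∂P| ≤ K * δ := by
  rw [← integral_sub hiA hiB]
  have key : ∀ᵐ ω ∂P, ‖f (A₁ ω, A₂ ω) - f (B₁ ω, B₂ ω)‖ ≤ K * δ := by
    filter_upwards [h1, h2] with ω e1 e2
    have hd : dist (f (A₁ ω, A₂ ω)) (f (B₁ ω, B₂ ω)) ≤
        K * dist ((A₁ ω, A₂ ω)) ((B₁ ω, B₂ ω)) := hf.dist_le_mul _ _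
    have hdp : dist ((A₁ ω, A₂ ω)) ((B₁ ω, B₂ ω)) ≤ δ := by
      rw [Prod.dist_eq]
      simp only [Real.dist_eq]
      exact max_le e1 e2
    rw [Real.norm_eq_abs, ← Real.dist_eq]
    calc dist (f (A₁ ω, A₂ ω)) (f (B₁ ω, B₂ ω)) ≤ K * dist ((A₁ ω, A₂ ω)) ((B₁ ω, B₂ ω)) := hd
      _ ≤ K * δ := by nlinarith [K.coe_nonneg]
  calc |∫ ω, (f (A₁ ω, A₂ ω) - f (B₁ ω, B₂ ω)) ∂P|
      = ‖∫ ω, (f (A₁ ω, A₂ ω) - f (B₁ ω, B₂ ω)) ∂P‖ := (Real.norm_eq_abs _).symm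
    _ ≤ (K * δ) * (P Set.univ).toReal := norm_integral_le_of_norm_le_const key
    _ = K * δ := by simp


/-- for a bounded random variable `X` and a Lipschitz `f : ℝ² → ℝ`,
the supremum of `E[f(E[X|m₁], E[X|m₂])]` over all pairs of sub-σ-algebras equals
the supremum over all pairs of finite sub-σ-algebras. -/
theorem stmt13 {Ω : Type} [mΩ : MeasurableSpace Ω] (P : Measure Ω)
    [IsProbabilityMeasure P]
    (X : Ω → ℝ) (hXmeas : Measurable X) (C : ℝ) (hbdd : ∀ ω, |X ω| ≤ C)
    (f : ℝ × ℝ → ℝ) (K : NNReal) (hf : LipschitzWith K f) :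
    sSup {v | ∃ m₁ m₂ : MeasurableSpace Ω, m₁ ≤ mΩ ∧ m₂ ≤ mΩ ∧
        v = ∫ ω, f ((P[X|m₁]) ω, (P[X|m₂]) ω) ∂P} =
    sSup {v | ∃ m₁ m₂ : MeasurableSpace Ω, m₁ ≤ mΩ ∧ m₂ ≤ mΩ ∧
        {s | MeasurableSet[m₁] s}.Finite ∧ {s | MeasurableSet[m₂] s}.Finite ∧
        v = ∫ ω, f ((P[X|m₁]) ω, (P[X|m₂]) ω) ∂P} := by
  have hne : Nonempty Ω := by
    by_contra h
    rw [not_nonempty_iff] at h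
    have h1 : P Set.univ = 1 := measure_univ
    rw [Set.univ_eq_empty_iff.2 h] at h1
    simp at h1
  obtain ⟨ω₀⟩ := hne
  have hC : 0 ≤ C := (abs_nonneg _).trans (hbdd ω₀)
  have hbotfin : {s : Set Ω | MeasurableSet[⊥] s}.Finite := by
    refine Set.Finite.subset ((Set.finite_singleton Set.univ).insert ∅) ?_
    intro s hs
    rcases MeasurableSpace.measurableSet_bot_iff.1 hs with h | h <;> simp [h]
  have hsub : {v | ∃ m₁ m₂ : MeasurableSpace Ω, m₁ ≤ mΩ ∧ m₂ ≤ mΩ ∧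
        {s | MeasurableSet[m₁] s}.Finite ∧ {s | MeasurableSet[m₂] s}.Finite ∧
        v = ∫ ω, f ((P[X|m₁]) ω, (P[X|m₂]) ω) ∂P} ⊆
      {v | ∃ m₁ m₂ : MeasurableSpace Ω, m₁ ≤ mΩ ∧ m₂ ≤ mΩ ∧
        v = ∫ ω, f ((P[X|m₁]) ω, (P[X|m₂]) ω) ∂P} := by
    rintro v ⟨m₁, m₂, h1, h2, -, -, hv⟩
    exact ⟨m₁, m₂, h1, h2, hv⟩
  have hTne : {v | ∃ m₁ m₂ : MeasurableSpace Ω, m₁ ≤ mΩ ∧ m₂ ≤ mΩ ∧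
        {s | MeasurableSet[m₁] s}.Finite ∧ {s | MeasurableSet[m₂] s}.Finite ∧
        v = ∫ ω, f ((P[X|m₁]) ω, (P[X|m₂]) ω) ∂P}.Nonempty :=
    ⟨_, ⊥, ⊥, bot_le, bot_le, hbotfin, hbotfin, rfl⟩
  have hSne : {v | ∃ m₁ m₂ : MeasurableSpace Ω, m₁ ≤ mΩ ∧ m₂ ≤ mΩ ∧
        v = ∫ ω, f ((P[X|m₁]) ω, (P[X|m₂]) ω) ∂P}.Nonempty := hTne.mono hsub
  have hSbdd : BddAbove {v | ∃ m₁ m₂ : MeasurableSpace Ω, m₁ ≤ mΩ ∧ m₂ ≤ mΩ ∧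
        v = ∫ ω, f ((P[X|m₁]) ω, (P[X|m₂]) ω) ∂P} := by
    refine ⟨|f (0, 0)| + K * C, ?_⟩
    rintro v ⟨m₁, m₂, h1, h2, rfl⟩
    obtain ⟨hint, hbd⟩ := F_props (mΩ := mΩ) P X C hC hbdd f K hf m₁ m₂ h1 h2
    calc ∫ ω, f ((P[X|m₁]) ω, (P[X|m₂]) ω) ∂P
        ≤ ∫ _ω, (|f (0, 0)| + K * C) ∂P := by
          refine integral_mono_ae hint (integrable_const _) ?_
          filter_upwards [hbd] with ω h using (le_abs_self _).trans h
      _ = |f (0, 0)| + K * C := by simp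
  have hTbdd : BddAbove {v | ∃ m₁ m₂ : MeasurableSpace Ω, m₁ ≤ mΩ ∧ m₂ ≤ mΩ ∧
        {s | MeasurableSet[m₁] s}.Finite ∧ {s | MeasurableSet[m₂] s}.Finite ∧
        v = ∫ ω, f ((P[X|m₁]) ω, (P[X|m₂]) ω) ∂P} := hSbdd.mono hsub
  refine le_antisymm ?_ (csSup_le_csSup hSbdd hTne hsub)
  refine csSup_le hSne ?_
  rintro v ⟨m₁, m₂, h1, h2, rfl⟩
  refine le_of_forall_pos_le_add ?_
  intro δ hδ
  have hK1 : (0 : ℝ) < (K : ℝ) + 1 := by positivity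
  have hε : 0 < δ / (8 * ((K : ℝ) + 1)) := by positivity
  obtain ⟨g₁, hg₁, hg₁fin, hc₁⟩ :=
    approx_condexp (mΩ := mΩ) P X hXmeas C hC hbdd m₁ h1 (δ / (8 * ((K : ℝ) + 1))) hε
  obtain ⟨g₂, hg₂, hg₂fin, hc₂⟩ :=
    approx_condexp (mΩ := mΩ) P X hXmeas C hC hbdd m₂ h2 (δ / (8 * ((K : ℝ) + 1))) hε
  have hmemT : (∫ ω, f ((P[X|g₁]) ω, (P[X|g₂]) ω) ∂P) ∈
      {v | ∃ m₁ m₂ : MeasurableSpace Ω, m₁ ≤ mΩ ∧ m₂ ≤ mΩ ∧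
        {s | MeasurableSet[m₁] s}.Finite ∧ {s | MeasurableSet[m₂] s}.Finite ∧
        v = ∫ ω, f ((P[X|m₁]) ω, (P[X|m₂]) ω) ∂P} :=
    ⟨g₁, g₂, hg₁, hg₂, hg₁fin, hg₂fin, rfl⟩
  have hiA := (F_props (mΩ := mΩ) P X C hC hbdd f K hf m₁ m₂ h1 h2).1
  have hiB := (F_props (mΩ := mΩ) P X C hC hbdd f K hf g₁ g₂ hg₁ hg₂).1
  have hdiff : |∫ ω, f ((P[X|m₁]) ω, (P[X|m₂]) ω) ∂P -
      ∫ ω, f ((P[X|g₁]) ω, (P[X|g₂]) ω) ∂P| ≤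
      K * (2 * (δ / (8 * ((K : ℝ) + 1)))) := by
    refine F_diff (mΩ := mΩ) P f K hf _ _ _ _ (2 * (δ / (8 * ((K : ℝ) + 1))))
      (by positivity) ?_ ?_ hiA hiB
    · filter_upwards [hc₁] with ω h using by rw [abs_sub_comm]; exact h
    · filter_upwards [hc₂] with ω h using by rw [abs_sub_comm]; exact h
  have hKe : (K : ℝ) * (2 * (δ / (8 * ((K : ℝ) + 1)))) ≤ δ := by
    have hKle : (K : ℝ) ≤ (K : ℝ) + 1 := by linarith
    have h8 : 0 ≤ 2 * (δ / (8 * ((K : ℝ) + 1))) := by positivity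
    have heq : ((K : ℝ) + 1) * (2 * (δ / (8 * ((K : ℝ) + 1)))) = δ / 4 := by
      field_simp; ring
    nlinarith [K.coe_nonneg]
  have hle := abs_le.1 hdiff
  calc ∫ ω, f ((P[X|m₁]) ω, (P[X|m₂]) ω) ∂P
      ≤ ∫ ω, f ((P[X|g₁]) ω, (P[X|g₂]) ω) ∂P +
        (K : ℝ) * (2 * (δ / (8 * ((K : ℝ) + 1)))) := by linarith [hle.2]
    _ ≤ sSup {v | ∃ m₁ m₂ : MeasurableSpace Ω, m₁ ≤ mΩ ∧ m₂ ≤ mΩ ∧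
        {s | MeasurableSet[m₁] s}.Finite ∧ {s | MeasurableSet[m₂] s}.Finite ∧
        v = ∫ ω, f ((P[X|m₁]) ω, (P[X|m₂]) ω) ∂P} + δ :=
      add_le_add (le_csSup hTbdd hmemT) hKe
end
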